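/- arXiv:2406.02186 — 11 statements merged into one kernel-verified Lean document; each statement's English description precedes it below -/
import Mathlib

section
/- Fix real parameters a₁, a₂ ∈ (0,1], b₁, b₂ ∈ (0,1), and λ₁, λ₂ > 0, and set u_i = b_iλ_i/a_i. If √u₁ + √u₂ < 1, then the equation c = ∏_{i=1}^{2} a_i c/(a_i c + b_i λ_i) has exactly two solutions in (0, ∞), namely c_L = ((1 − u₁ − u₂) + √D)/2 and c_S = ((1 − u₁ − u₂) − √D)/2 where D = (1 − u₁ − u₂)² − 4u₁u₂, and these satisfy 0 < c_S < c_L. If √u₁ + √u₂ > 1, the equation has no solution in (0, ∞). -/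
/-!
For `c > 0`, clearing denominators turns `c = F(c)` into the quadratic
`c² - (1 - u₁ - u₂) c + u₁ u₂ = 0`, whose discriminant factors as
`(1 - (√u₁ + √u₂)²) (1 - (√u₁ - √u₂)²)`. If `√u₁ + √u₂ < 1` it is positive,
and smaller than `(1 - u₁ - u₂)²` because `u₁ u₂ > 0`, so both roots are positive.
Conversely a positive root gives `1 - u₁ - u₂ = c + u₁ u₂ / c ≥ 2 √u₁ √u₂` by AM-GM,
that is `√u₁ + √u₂ ≤ 1`.
-/

open Real

/-- The product map `F(c) = ∏_{i=1,2} aᵢ c / (aᵢ c + bᵢ λᵢ)` from the two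
transmitter–receiver pair fixed-point equation. -/
noncomputable def twoPairF (a₁ a₂ b₁ b₂ l₁ l₂ c : ℝ) : ℝ :=
  (a₁ * c / (a₁ * c + b₁ * l₁)) * (a₂ * c / (a₂ * c + b₂ * l₂))

/-- Discriminant `D = (1 − u₁ − u₂)² − 4 u₁ u₂` with `uᵢ = bᵢ λᵢ / aᵢ`. -/
noncomputable def twoPairD (a₁ a₂ b₁ b₂ l₁ l₂ : ℝ) : ℝ :=
  (1 - b₁ * l₁ / a₁ - b₂ * l₂ / a₂) ^ 2 - 4 * (b₁ * l₁ / a₁) * (b₂ * l₂ / a₂)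

/-- Larger root `c_L = ((1 − u₁ − u₂) + √D)/2`. -/
noncomputable def twoPairCL (a₁ a₂ b₁ b₂ l₁ l₂ : ℝ) : ℝ :=
  ((1 - b₁ * l₁ / a₁ - b₂ * l₂ / a₂) + Real.sqrt (twoPairD a₁ a₂ b₁ b₂ l₁ l₂)) / 2

/-- Smaller root `c_S = ((1 − u₁ − u₂) − √D)/2`. -/
noncomputable def twoPairCS (a₁ a₂ b₁ b₂ l₁ l₂ : ℝ) : ℝ :=
  ((1 - b₁ * l₁ / a₁ - b₂ * l₂ / a₂) - Real.sqrt (twoPairD a₁ a₂ b₁ b₂ l₁ l₂)) / 2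

theorem mul_div_mul_add_eq_div_add_div {K : Type*} [Field K] {a : K} (ha : a ≠ 0) (c β : K) :
    a * c / (a * c + β) = c / (c + β / a) := by
  rw [← mul_div_mul_left c (c + β / a) ha, mul_add, mul_div_cancel₀ β ha]

theorem twoPairF_eq_div_add_mul_div_add {a₁ a₂ : ℝ} (ha₁ : a₁ ≠ 0) (ha₂ : a₂ ≠ 0)
    (b₁ b₂ l₁ l₂ c : ℝ) :
    twoPairF a₁ a₂ b₁ b₂ l₁ l₂ c = c / (c + b₁ * l₁ / a₁) * (c / (c + b₂ * l₂ / a₂)) := by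
  rw [twoPairF, mul_div_mul_add_eq_div_add_div ha₁, mul_div_mul_add_eq_div_add_div ha₂]

section

variable {u₁ u₂ : ℝ}

theorem eq_div_add_mul_div_add_iff (hu₁ : 0 ≤ u₁) (hu₂ : 0 ≤ u₂) {c : ℝ} (hc : 0 < c) :
    c = c / (c + u₁) * (c / (c + u₂)) ↔ c * c - (1 - u₁ - u₂) * c + u₁ * u₂ = 0 := by
  rw [div_mul_div_comm, eq_div_iff (by positivity), mul_right_inj' hc.ne']
  constructor <;> intro h <;> linear_combination h

theorem sq_sub_four_mul_mul_eq (hu₁ : 0 ≤ u₁) (hu₂ : 0 ≤ u₂) :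
    (1 - u₁ - u₂) ^ 2 - 4 * u₁ * u₂ = (1 - (√u₁ + √u₂) ^ 2) * (1 - (√u₁ - √u₂) ^ 2) := by
  conv_lhs => rw [← sq_sqrt hu₁, ← sq_sqrt hu₂]
  ring

theorem sq_sub_four_mul_mul_pos (hu₁ : 0 ≤ u₁) (hu₂ : 0 ≤ u₂) (h : √u₁ + √u₂ < 1) :
    0 < (1 - u₁ - u₂) ^ 2 - 4 * u₁ * u₂ := by
  have h₁ := sqrt_nonneg u₁
  have h₂ := sqrt_nonneg u₂
  rw [sq_sub_four_mul_mul_eq hu₁ hu₂]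
  apply mul_pos <;> nlinarith

theorem quadratic_eq_zero_iff_of_sqrt_add_sqrt_lt_one (hu₁ : 0 ≤ u₁) (hu₂ : 0 ≤ u₂)
    (h : √u₁ + √u₂ < 1) (c : ℝ) :
    c * c - (1 - u₁ - u₂) * c + u₁ * u₂ = 0 ↔
      c = ((1 - u₁ - u₂) + √((1 - u₁ - u₂) ^ 2 - 4 * u₁ * u₂)) / 2 ∨
      c = ((1 - u₁ - u₂) - √((1 - u₁ - u₂) ^ 2 - 4 * u₁ * u₂)) / 2 := by
  have hD := sq_sub_four_mul_mul_pos hu₁ hu₂ h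
  have hdiscrim : discrim 1 (-(1 - u₁ - u₂)) (u₁ * u₂) =
      √((1 - u₁ - u₂) ^ 2 - 4 * u₁ * u₂) * √((1 - u₁ - u₂) ^ 2 - 4 * u₁ * u₂) := by
    rw [mul_self_sqrt hD.le, discrim]; ring
  rw [show c * c - (1 - u₁ - u₂) * c + u₁ * u₂ =
      1 * (c * c) + -(1 - u₁ - u₂) * c + u₁ * u₂ by ring,
    quadratic_eq_zero_iff one_ne_zero hdiscrim c, neg_neg, mul_one]

theorem sub_sqrt_pos_of_sqrt_add_sqrt_lt_one (hu₁ : 0 < u₁) (hu₂ : 0 < u₂)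
    (h : √u₁ + √u₂ < 1) :
    0 < (1 - u₁ - u₂) - √((1 - u₁ - u₂) ^ 2 - 4 * u₁ * u₂) := by
  have h₁ := sq_sqrt hu₁.le
  have h₂ := sq_sqrt hu₂.le
  have hpos : 0 < 1 - u₁ - u₂ := by nlinarith [sqrt_pos.2 hu₁, sqrt_pos.2 hu₂]
  rw [sub_pos, sqrt_lt' hpos]
  nlinarith [mul_pos hu₁ hu₂]

theorem sqrt_add_sqrt_le_one_of_quadratic_eq_zero (hu₁ : 0 ≤ u₁) (hu₂ : 0 ≤ u₂) {c : ℝ}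
    (hc : 0 < c) (h : c * c - (1 - u₁ - u₂) * c + u₁ * u₂ = 0) : √u₁ + √u₂ ≤ 1 := by
  have h₁ := sq_sqrt hu₁
  have h₂ := sq_sqrt hu₂
  have hamgm : 2 * (√u₁ * √u₂) ≤ 1 - u₁ - u₂ := by
    refine le_of_mul_le_mul_right ?_ hc
    nlinarith [sq_nonneg (c - √u₁ * √u₂)]
  rw [← sq_le_one_iff₀ (by positivity)]
  nlinarith

end

theorem twoPair_fixedPoints_general (a₁ a₂ b₁ b₂ l₁ l₂ : ℝ)
    (ha₁ : 0 < a₁) (ha₂ : 0 < a₂)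
    (hb₁ : 0 < b₁) (hb₂ : 0 < b₂)
    (hl₁ : 0 < l₁) (hl₂ : 0 < l₂) :
    (Real.sqrt (b₁ * l₁ / a₁) + Real.sqrt (b₂ * l₂ / a₂) < 1 →
      0 < twoPairCS a₁ a₂ b₁ b₂ l₁ l₂ ∧
      twoPairCS a₁ a₂ b₁ b₂ l₁ l₂ < twoPairCL a₁ a₂ b₁ b₂ l₁ l₂ ∧
      twoPairCL a₁ a₂ b₁ b₂ l₁ l₂
        = twoPairF a₁ a₂ b₁ b₂ l₁ l₂ (twoPairCL a₁ a₂ b₁ b₂ l₁ l₂) ∧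
      twoPairCS a₁ a₂ b₁ b₂ l₁ l₂
        = twoPairF a₁ a₂ b₁ b₂ l₁ l₂ (twoPairCS a₁ a₂ b₁ b₂ l₁ l₂) ∧
      ∀ c : ℝ, 0 < c → c = twoPairF a₁ a₂ b₁ b₂ l₁ l₂ c →
        c = twoPairCL a₁ a₂ b₁ b₂ l₁ l₂ ∨ c = twoPairCS a₁ a₂ b₁ b₂ l₁ l₂) ∧
    (1 < Real.sqrt (b₁ * l₁ / a₁) + Real.sqrt (b₂ * l₂ / a₂) →
      ¬ ∃ c : ℝ, 0 < c ∧ c = twoPairF a₁ a₂ b₁ b₂ l₁ l₂ c) := by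
  have hu₁ : 0 < b₁ * l₁ / a₁ := by positivity
  have hu₂ : 0 < b₂ * l₂ / a₂ := by positivity
  have hfix : ∀ c, 0 < c → (c = twoPairF a₁ a₂ b₁ b₂ l₁ l₂ c ↔
      c * c - (1 - b₁ * l₁ / a₁ - b₂ * l₂ / a₂) * c + b₁ * l₁ / a₁ * (b₂ * l₂ / a₂) = 0) :=
    fun c hc => by
      rw [twoPairF_eq_div_add_mul_div_add ha₁.ne' ha₂.ne',
        eq_div_add_mul_div_add_iff hu₁.le hu₂.le hc]
  refine ⟨fun h => ?_, fun h ⟨c, hc, hc_fix⟩ => ?_⟩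
  · have hroots := quadratic_eq_zero_iff_of_sqrt_add_sqrt_lt_one hu₁.le hu₂.le h
    have hS : 0 < twoPairCS a₁ a₂ b₁ b₂ l₁ l₂ :=
      half_pos (sub_sqrt_pos_of_sqrt_add_sqrt_lt_one hu₁ hu₂ h)
    have hSL : twoPairCS a₁ a₂ b₁ b₂ l₁ l₂ < twoPairCL a₁ a₂ b₁ b₂ l₁ l₂ := by
      have : 0 < √(twoPairD a₁ a₂ b₁ b₂ l₁ l₂) :=
        sqrt_pos.2 (sq_sub_four_mul_mul_pos hu₁.le hu₂.le h)
      unfold twoPairCS twoPairCL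
      linarith
    refine ⟨hS, hSL, ?_, ?_, fun c hc hc_fix => (hroots c).1 ((hfix c hc).1 hc_fix)⟩
    · exact (hfix _ (hS.trans hSL)).2 ((hroots _).2 (Or.inl rfl))
    · exact (hfix _ hS).2 ((hroots _).2 (Or.inr rfl))
  · exact (sqrt_add_sqrt_le_one_of_quadratic_eq_zero hu₁.le hu₂.le hc
      ((hfix c hc).1 hc_fix)).not_gt h

/-- If `√u₁ + √u₂ < 1` the equation `c = ∏_i aᵢ c/(aᵢ c + bᵢ λᵢ)` has exactly the two
positive solutions `c_L` and `c_S`, with `0 < c_S < c_L`; if `√u₁ + √u₂ > 1` it has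
no positive solution. -/
theorem twoPair_fixedPoints (a₁ a₂ b₁ b₂ l₁ l₂ : ℝ)
    (ha₁ : 0 < a₁) (ha₁' : a₁ ≤ 1) (ha₂ : 0 < a₂) (ha₂' : a₂ ≤ 1)
    (hb₁ : 0 < b₁) (hb₁' : b₁ < 1) (hb₂ : 0 < b₂) (hb₂' : b₂ < 1)
    (hl₁ : 0 < l₁) (hl₂ : 0 < l₂) :
    (Real.sqrt (b₁ * l₁ / a₁) + Real.sqrt (b₂ * l₂ / a₂) < 1 →
      0 < twoPairCS a₁ a₂ b₁ b₂ l₁ l₂ ∧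
      twoPairCS a₁ a₂ b₁ b₂ l₁ l₂ < twoPairCL a₁ a₂ b₁ b₂ l₁ l₂ ∧
      twoPairCL a₁ a₂ b₁ b₂ l₁ l₂
        = twoPairF a₁ a₂ b₁ b₂ l₁ l₂ (twoPairCL a₁ a₂ b₁ b₂ l₁ l₂) ∧
      twoPairCS a₁ a₂ b₁ b₂ l₁ l₂
        = twoPairF a₁ a₂ b₁ b₂ l₁ l₂ (twoPairCS a₁ a₂ b₁ b₂ l₁ l₂) ∧
      ∀ c : ℝ, 0 < c → c = twoPairF a₁ a₂ b₁ b₂ l₁ l₂ c →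
        c = twoPairCL a₁ a₂ b₁ b₂ l₁ l₂ ∨ c = twoPairCS a₁ a₂ b₁ b₂ l₁ l₂) ∧
    (1 < Real.sqrt (b₁ * l₁ / a₁) + Real.sqrt (b₂ * l₂ / a₂) →
      ¬ ∃ c : ℝ, 0 < c ∧ c = twoPairF a₁ a₂ b₁ b₂ l₁ l₂ c) :=
  twoPair_fixedPoints_general a₁ a₂ b₁ b₂ l₁ l₂ ha₁ ha₂ hb₁ hb₂ hl₁ hl₂
end

section
/- Fix real parameters a₁, a₂ ∈ (0,1], b₁, b₂ ∈ (0,1), λ₁, λ₂ > 0, set u_i = b_iλ_i/a_i, and assume √u₁ + √u₂ < 1. Then the pair (p_{1,L}, p_{2,L}) with p_{i,L} = a_i c_L + b_i λ_i, and the pair (p_{1,S}, p_{2,S}) with p_{i,S} = a_i c_S + b_i λ_i, each have strictly positive coordinates and each satisfy the system of equations p₁ = a₁(1 − b₂λ₂/p₂) and p₂ = a₂(1 − b₁λ₁/p₁). -/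
open Real

/-!
Put `uᵢ = bᵢλᵢ/aᵢ`, so that `p_i = aᵢ(c + uᵢ)`. Clearing denominators, the system
`p₁ = a₁(1 − b₂λ₂/p₂)`, `p₂ = a₂(1 − b₁λ₁/p₁)` becomes, in both equations, the single relation
`(c + u₁)(c + u₂) = c`, i.e. `c² − (1 − u₁ − u₂)c + u₁u₂ = 0`, whose roots are `c_L` and `c_S`.
Both roots are positive: their sum `1 − u₁ − u₂` and product `u₁u₂` are positive, and the
discriminant is nonnegative because `√u₁ + √u₂ < 1` gives `1 − u₁ − u₂ > 2√(u₁u₂)`.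
-/

section Quadratic

variable {u₁ u₂ c : ℝ}

lemma two_mul_sqrt_mul_sqrt_lt_one_sub_sub (hu₁ : 0 ≤ u₁) (hu₂ : 0 ≤ u₂)
    (h : √u₁ + √u₂ < 1) : 2 * (√u₁ * √u₂) < 1 - u₁ - u₂ := by
  have hsq : (√u₁ + √u₂) ^ 2 < 1 := by
    nlinarith [sqrt_nonneg u₁, sqrt_nonneg u₂]
  nlinarith [sq_sqrt hu₁, sq_sqrt hu₂]

lemma four_mul_mul_le_sq_one_sub_sub (hu₁ : 0 ≤ u₁) (hu₂ : 0 ≤ u₂)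
    (h : √u₁ + √u₂ < 1) : 4 * u₁ * u₂ ≤ (1 - u₁ - u₂) ^ 2 :=
  calc 4 * u₁ * u₂ = (2 * (√u₁ * √u₂)) ^ 2 := by
        rw [mul_pow, mul_pow, sq_sqrt hu₁, sq_sqrt hu₂]; ring
    _ ≤ (1 - u₁ - u₂) ^ 2 :=
        pow_le_pow_left₀ (by positivity) (two_mul_sqrt_mul_sqrt_lt_one_sub_sub hu₁ hu₂ h).le 2

lemma sqrt_discrim_lt (hu : 0 < u₁ * u₂) (hs : 0 < 1 - u₁ - u₂) :
    √((1 - u₁ - u₂) ^ 2 - 4 * u₁ * u₂) < 1 - u₁ - u₂ :=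
  (sqrt_lt' hs).2 (by linarith)

lemma add_mul_add_eq_self_of_sq_eq_discrim
    (h : (2 * c - (1 - u₁ - u₂)) ^ 2 = (1 - u₁ - u₂) ^ 2 - 4 * u₁ * u₂) :
    (c + u₁) * (c + u₂) = c := by
  linear_combination h / 4

end Quadratic

section TwoPair

variable {a₁ a₂ b₁ b₂ l₁ l₂ : ℝ}

lemma twoPairD_nonneg (hu₁ : 0 ≤ b₁ * l₁ / a₁) (hu₂ : 0 ≤ b₂ * l₂ / a₂)
    (hcond : √(b₁ * l₁ / a₁) + √(b₂ * l₂ / a₂) < 1) : 0 ≤ twoPairD a₁ a₂ b₁ b₂ l₁ l₂ :=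
  sub_nonneg.2 (four_mul_mul_le_sq_one_sub_sub hu₁ hu₂ hcond)

lemma twoPairCS_le_twoPairCL : twoPairCS a₁ a₂ b₁ b₂ l₁ l₂ ≤ twoPairCL a₁ a₂ b₁ b₂ l₁ l₂ := by
  unfold twoPairCS twoPairCL
  linarith [sqrt_nonneg (twoPairD a₁ a₂ b₁ b₂ l₁ l₂)]

lemma twoPairCS_pos (hu₁ : 0 < b₁ * l₁ / a₁) (hu₂ : 0 < b₂ * l₂ / a₂)
    (hcond : √(b₁ * l₁ / a₁) + √(b₂ * l₂ / a₂) < 1) : 0 < twoPairCS a₁ a₂ b₁ b₂ l₁ l₂ := by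
  have hs : 0 < 1 - b₁ * l₁ / a₁ - b₂ * l₂ / a₂ :=
    lt_of_le_of_lt (by positivity) (two_mul_sqrt_mul_sqrt_lt_one_sub_sub hu₁.le hu₂.le hcond)
  have := sqrt_discrim_lt (mul_pos hu₁ hu₂) hs
  unfold twoPairCS twoPairD
  linarith

lemma twoPairCL_root (hD : 0 ≤ twoPairD a₁ a₂ b₁ b₂ l₁ l₂) :
    (twoPairCL a₁ a₂ b₁ b₂ l₁ l₂ + b₁ * l₁ / a₁) * (twoPairCL a₁ a₂ b₁ b₂ l₁ l₂ + b₂ * l₂ / a₂)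
      = twoPairCL a₁ a₂ b₁ b₂ l₁ l₂ := by
  refine add_mul_add_eq_self_of_sq_eq_discrim ?_
  have := sq_sqrt hD
  unfold twoPairCL
  unfold twoPairD at this ⊢
  linear_combination this

lemma twoPairCS_root (hD : 0 ≤ twoPairD a₁ a₂ b₁ b₂ l₁ l₂) :
    (twoPairCS a₁ a₂ b₁ b₂ l₁ l₂ + b₁ * l₁ / a₁) * (twoPairCS a₁ a₂ b₁ b₂ l₁ l₂ + b₂ * l₂ / a₂)
      = twoPairCS a₁ a₂ b₁ b₂ l₁ l₂ := by
  refine add_mul_add_eq_self_of_sq_eq_discrim ?_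
  have := sq_sqrt hD
  unfold twoPairCS
  unfold twoPairD at this ⊢
  linear_combination this

end TwoPair

section FixedPoint

variable {a₁ a₂ β₁ β₂ c : ℝ}

lemma eq_mul_one_sub_div_of_root (ha₁ : a₁ ≠ 0) (ha₂ : a₂ ≠ 0) (hp₂ : a₂ * c + β₂ ≠ 0)
    (h : (c + β₁ / a₁) * (c + β₂ / a₂) = c) :
    a₁ * c + β₁ = a₁ * (1 - β₂ / (a₂ * c + β₂)) := by
  rw [one_sub_div hp₂, add_sub_cancel_right, eq_comm, mul_div_assoc', div_eq_iff hp₂]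
  field_simp at h
  linear_combination -h

lemma solves_system_of_root (ha₁ : 0 < a₁) (ha₂ : 0 < a₂) (hβ₁ : 0 ≤ β₁) (hβ₂ : 0 ≤ β₂)
    (hc : 0 < c) (h : (c + β₁ / a₁) * (c + β₂ / a₂) = c) :
    0 < a₁ * c + β₁ ∧ 0 < a₂ * c + β₂ ∧
      a₁ * c + β₁ = a₁ * (1 - β₂ / (a₂ * c + β₂)) ∧
      a₂ * c + β₂ = a₂ * (1 - β₁ / (a₁ * c + β₁)) := by
  have hp₁ : 0 < a₁ * c + β₁ := by positivity
  have hp₂ : 0 < a₂ * c + β₂ := by positivity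
  exact ⟨hp₁, hp₂, eq_mul_one_sub_div_of_root ha₁.ne' ha₂.ne' hp₂.ne' h,
    eq_mul_one_sub_div_of_root ha₂.ne' ha₁.ne' hp₁.ne' (by rw [mul_comm, h])⟩

end FixedPoint

theorem twoPair_steadyStates_solve_system_general (a₁ a₂ b₁ b₂ l₁ l₂ : ℝ)
    (ha₁ : 0 < a₁) (ha₂ : 0 < a₂)
    (hb₁ : 0 < b₁) (hb₂ : 0 < b₂)
    (hl₁ : 0 < l₁) (hl₂ : 0 < l₂)
    (hcond : Real.sqrt (b₁ * l₁ / a₁) + Real.sqrt (b₂ * l₂ / a₂) < 1) :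
    let p₁L := a₁ * twoPairCL a₁ a₂ b₁ b₂ l₁ l₂ + b₁ * l₁
    let p₂L := a₂ * twoPairCL a₁ a₂ b₁ b₂ l₁ l₂ + b₂ * l₂
    let p₁S := a₁ * twoPairCS a₁ a₂ b₁ b₂ l₁ l₂ + b₁ * l₁
    let p₂S := a₂ * twoPairCS a₁ a₂ b₁ b₂ l₁ l₂ + b₂ * l₂
    (0 < p₁L ∧ 0 < p₂L ∧
      p₁L = a₁ * (1 - b₂ * l₂ / p₂L) ∧ p₂L = a₂ * (1 - b₁ * l₁ / p₁L)) ∧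
    (0 < p₁S ∧ 0 < p₂S ∧
      p₁S = a₁ * (1 - b₂ * l₂ / p₂S) ∧ p₂S = a₂ * (1 - b₁ * l₁ / p₁S)) := by
  intro p₁L p₂L p₁S p₂S
  have hu₁ : 0 < b₁ * l₁ / a₁ := by positivity
  have hu₂ : 0 < b₂ * l₂ / a₂ := by positivity
  have hD := twoPairD_nonneg hu₁.le hu₂.le hcond
  have hCS := twoPairCS_pos hu₁ hu₂ hcond
  exact ⟨solves_system_of_root ha₁ ha₂ (by positivity) (by positivity)
      (hCS.trans_le twoPairCS_le_twoPairCL) (twoPairCL_root hD),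
    solves_system_of_root ha₁ ha₂ (by positivity) (by positivity) hCS (twoPairCS_root hD)⟩

/-- The pairs `p_{i,L} = aᵢ c_L + bᵢ λᵢ` and `p_{i,S} = aᵢ c_S + bᵢ λᵢ` have positive
coordinates and both solve the all-unsaturated fixed-point system
`p₁ = a₁(1 − b₂λ₂/p₂)`, `p₂ = a₂(1 − b₁λ₁/p₁)`. -/
theorem twoPair_steadyStates_solve_system (a₁ a₂ b₁ b₂ l₁ l₂ : ℝ)
    (ha₁ : 0 < a₁) (ha₁' : a₁ ≤ 1) (ha₂ : 0 < a₂) (ha₂' : a₂ ≤ 1)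
    (hb₁ : 0 < b₁) (hb₁' : b₁ < 1) (hb₂ : 0 < b₂) (hb₂' : b₂ < 1)
    (hl₁ : 0 < l₁) (hl₂ : 0 < l₂)
    (hcond : Real.sqrt (b₁ * l₁ / a₁) + Real.sqrt (b₂ * l₂ / a₂) < 1) :
    let p₁L := a₁ * twoPairCL a₁ a₂ b₁ b₂ l₁ l₂ + b₁ * l₁
    let p₂L := a₂ * twoPairCL a₁ a₂ b₁ b₂ l₁ l₂ + b₂ * l₂
    let p₁S := a₁ * twoPairCS a₁ a₂ b₁ b₂ l₁ l₂ + b₁ * l₁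
    let p₂S := a₂ * twoPairCS a₁ a₂ b₁ b₂ l₁ l₂ + b₂ * l₂
    (0 < p₁L ∧ 0 < p₂L ∧
      p₁L = a₁ * (1 - b₂ * l₂ / p₂L) ∧ p₂L = a₂ * (1 - b₁ * l₁ / p₁L)) ∧
    (0 < p₁S ∧ 0 < p₂S ∧
      p₁S = a₁ * (1 - b₂ * l₂ / p₂S) ∧ p₂S = a₂ * (1 - b₁ * l₁ / p₁S)) :=
  twoPair_steadyStates_solve_system_general a₁ a₂ b₁ b₂ l₁ l₂ ha₁ ha₂ hb₁ hb₂ hl₁ hl₂ hcond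
end

section
/- Fix real parameters a₁, a₂ ∈ (0,1], b₁, b₂ ∈ (0,1), λ₁, λ₂ > 0, set u_i = b_iλ_i/a_i, assume √u₁ + √u₂ < 1, and define F : (0,∞) → ℝ by F(c) = ∏_{i=1}^{2} a_i c/(a_i c + b_i λ_i). Then the derivative of F satisfies 0 < F′(c_L) < 1 and F′(c_S) > 1, where c_L and c_S are the two fixed points of F in (0,∞). -/
open Real

/-!
Dividing by `aᵢ`, `F(c) = c/(c + u₁) · c/(c + u₂)`, whose positive fixed points are the roots
`c = (s ± √D)/2` of `(c + u₁)(c + u₂) = c`, where `s = 1 − u₁ − u₂`. At such a root the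
logarithmic derivative gives `F′(c) = u₁/(c + u₁) + u₂/(c + u₂) = 2 − (u₁ + u₂) − 2c`, that is
`F′(c_L) = 1 − √D` and `F′(c_S) = 1 + √D`. Finally `√u₁ + √u₂ < 1` makes
`D = (1 − (√u₁ + √u₂)²)(1 − (√u₁ − √u₂)²)` positive, and `√D < s < 1` since `u₁ u₂ > 0`.
-/

noncomputable def ratioProd (u₁ u₂ x : ℝ) : ℝ :=
  x / (x + u₁) * (x / (x + u₂))

lemma twoPairF_eq_ratioProd {a₁ a₂ : ℝ} (b₁ b₂ l₁ l₂ : ℝ) (ha₁ : a₁ ≠ 0) (ha₂ : a₂ ≠ 0) :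
    twoPairF a₁ a₂ b₁ b₂ l₁ l₂ = ratioProd (b₁ * l₁ / a₁) (b₂ * l₂ / a₂) := by
  funext x
  have h₁ : a₁ * x + b₁ * l₁ = a₁ * (x + b₁ * l₁ / a₁) := by field_simp
  have h₂ : a₂ * x + b₂ * l₂ = a₂ * (x + b₂ * l₂ / a₂) := by field_simp
  rw [twoPairF, ratioProd, h₁, h₂, mul_div_mul_left _ _ ha₁, mul_div_mul_left _ _ ha₂]

lemma hasDerivAt_div_add (u x : ℝ) (hx : x + u ≠ 0) :
    HasDerivAt (fun y => y / (y + u)) (u / (x + u) ^ 2) x := by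
  refine ((hasDerivAt_id x).div ((hasDerivAt_id x).add_const u) hx).congr_deriv ?_
  simp only [id]
  ring

section FixedPoint

variable {u₁ u₂ c : ℝ}

lemma hasDerivAt_ratioProd_of_mul_eq (hc : c ≠ 0) (hfix : (c + u₁) * (c + u₂) = c) :
    HasDerivAt (ratioProd u₁ u₂) (2 - (u₁ + u₂) - 2 * c) c := by
  have h₁ : c + u₁ ≠ 0 := left_ne_zero_of_mul (hfix ▸ hc)
  have h₂ : c + u₂ ≠ 0 := right_ne_zero_of_mul (hfix ▸ hc)
  refine ((hasDerivAt_div_add u₁ c h₁).mul (hasDerivAt_div_add u₂ c h₂)).congr_deriv ?_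
  field_simp
  linear_combination (2 * c - ((c + u₁) * (c + u₂) + c) * (2 - (u₁ + u₂) - 2 * c)) * hfix

lemma mul_eq_self_of_two_mul_eq {d : ℝ} (hd : d ^ 2 = (1 - u₁ - u₂) ^ 2 - 4 * u₁ * u₂)
    (hc : 2 * c = 1 - u₁ - u₂ + d) : (c + u₁) * (c + u₂) = c := by
  linear_combination (hd + (2 * c - (1 - u₁ - u₂) + d) * hc) / 4

lemma hasDerivAt_ratioProd_of_two_mul_eq {d : ℝ} (hd : d ^ 2 = (1 - u₁ - u₂) ^ 2 - 4 * u₁ * u₂)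
    (hc : 2 * c = 1 - u₁ - u₂ + d) (hc₀ : c ≠ 0) : HasDerivAt (ratioProd u₁ u₂) (1 - d) c := by
  convert hasDerivAt_ratioProd_of_mul_eq hc₀ (mul_eq_self_of_two_mul_eq hd hc) using 1
  linarith

end FixedPoint

lemma discr_pos_of_add_lt_one {x y : ℝ} (hx : 0 ≤ x) (hy : 0 ≤ y) (hxy : x + y < 1) :
    0 < (1 - x ^ 2 - y ^ 2) ^ 2 - 4 * x ^ 2 * y ^ 2 := by
  have h₁ : 0 < 1 - (x + y) ^ 2 := by nlinarith
  have h₂ : 0 < 1 - (x - y) ^ 2 := by nlinarith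
  calc 0 < (1 - (x + y) ^ 2) * (1 - (x - y) ^ 2) := mul_pos h₁ h₂
    _ = _ := by ring

lemma sqrt_discr_pos_and_lt {u₁ u₂ : ℝ} (hu₁ : 0 < u₁) (hu₂ : 0 < u₂) (h : √u₁ + √u₂ < 1) :
    0 < √((1 - u₁ - u₂) ^ 2 - 4 * u₁ * u₂) ∧
      √((1 - u₁ - u₂) ^ 2 - 4 * u₁ * u₂) < 1 - u₁ - u₂ := by
  obtain ⟨x, hx, rfl⟩ : ∃ x, 0 < x ∧ x ^ 2 = u₁ := ⟨√u₁, by positivity, sq_sqrt hu₁.le⟩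
  obtain ⟨y, hy, rfl⟩ : ∃ y, 0 < y ∧ y ^ 2 = u₂ := ⟨√u₂, by positivity, sq_sqrt hu₂.le⟩
  rw [sqrt_sq hx.le, sqrt_sq hy.le] at h
  have hs : 0 < 1 - x ^ 2 - y ^ 2 := by nlinarith
  refine ⟨sqrt_pos.2 (discr_pos_of_add_lt_one hx.le hy.le h), (sqrt_lt' hs).2 ?_⟩
  nlinarith [mul_pos hx hy]

theorem twoPair_deriv_at_fixedPoints_general (a₁ a₂ b₁ b₂ l₁ l₂ : ℝ)
    (ha₁ : 0 < a₁) (ha₂ : 0 < a₂)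
    (hb₁ : 0 < b₁) (hb₂ : 0 < b₂)
    (hl₁ : 0 < l₁) (hl₂ : 0 < l₂)
    (hcond : Real.sqrt (b₁ * l₁ / a₁) + Real.sqrt (b₂ * l₂ / a₂) < 1) :
    (0 < deriv (twoPairF a₁ a₂ b₁ b₂ l₁ l₂) (twoPairCL a₁ a₂ b₁ b₂ l₁ l₂) ∧
      deriv (twoPairF a₁ a₂ b₁ b₂ l₁ l₂) (twoPairCL a₁ a₂ b₁ b₂ l₁ l₂) < 1) ∧
    1 < deriv (twoPairF a₁ a₂ b₁ b₂ l₁ l₂) (twoPairCS a₁ a₂ b₁ b₂ l₁ l₂) := by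
  have hu₁ : 0 < b₁ * l₁ / a₁ := by positivity
  have hu₂ : 0 < b₂ * l₂ / a₂ := by positivity
  rw [twoPairF_eq_ratioProd b₁ b₂ l₁ l₂ ha₁.ne' ha₂.ne']
  unfold twoPairCL twoPairCS twoPairD
  obtain ⟨hd, hds⟩ := sqrt_discr_pos_and_lt hu₁ hu₂ hcond
  set u₁ := b₁ * l₁ / a₁
  set u₂ := b₂ * l₂ / a₂
  set d := √((1 - u₁ - u₂) ^ 2 - 4 * u₁ * u₂)
  have hd₂ : d ^ 2 = (1 - u₁ - u₂) ^ 2 - 4 * u₁ * u₂ := sq_sqrt (sqrt_pos.1 hd).le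
  rw [(hasDerivAt_ratioProd_of_two_mul_eq hd₂ (by ring) (by linarith)).deriv,
    (hasDerivAt_ratioProd_of_two_mul_eq (d := -d) (by rw [neg_sq, hd₂]) (by ring)
      (by linarith)).deriv]
  exact ⟨⟨by linarith, by linarith⟩, by linarith⟩

/-- `c_L` is attracting (`0 < F′(c_L) < 1`) and `c_S` is repelling (`F′(c_S) > 1`). -/
theorem twoPair_deriv_at_fixedPoints (a₁ a₂ b₁ b₂ l₁ l₂ : ℝ)
    (ha₁ : 0 < a₁) (ha₁' : a₁ ≤ 1) (ha₂ : 0 < a₂) (ha₂' : a₂ ≤ 1)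
    (hb₁ : 0 < b₁) (hb₁' : b₁ < 1) (hb₂ : 0 < b₂) (hb₂' : b₂ < 1)
    (hl₁ : 0 < l₁) (hl₂ : 0 < l₂)
    (hcond : Real.sqrt (b₁ * l₁ / a₁) + Real.sqrt (b₂ * l₂ / a₂) < 1) :
    (0 < deriv (twoPairF a₁ a₂ b₁ b₂ l₁ l₂) (twoPairCL a₁ a₂ b₁ b₂ l₁ l₂) ∧
      deriv (twoPairF a₁ a₂ b₁ b₂ l₁ l₂) (twoPairCL a₁ a₂ b₁ b₂ l₁ l₂) < 1) ∧
    1 < deriv (twoPairF a₁ a₂ b₁ b₂ l₁ l₂) (twoPairCS a₁ a₂ b₁ b₂ l₁ l₂) :=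
  twoPair_deriv_at_fixedPoints_general a₁ a₂ b₁ b₂ l₁ l₂ ha₁ ha₂ hb₁ hb₂ hl₁ hl₂ hcond
end

section
/- Fix real parameters a₁, a₂ ∈ (0,1], b₁, b₂ ∈ (0,1), λ₁, λ₂ > 0, set u_i = b_iλ_i/a_i, assume √u₁ + √u₂ < 1, and define F : (0,∞) → ℝ by F(c) = ∏_{i=1}^{2} a_i c/(a_i c + b_i λ_i). Let (c_t)_{t≥0} be the sequence defined by any c₀ ∈ (0,∞) and c_{t+1} = F(c_t). If c₀ > c_S, then c_t converges to c_L as t → ∞. If 0 < c₀ < c_S, then (c_t) is strictly decreasing, satisfies c_t < c_S for all t, and hence does not converge to c_L. -/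
open Real

/-!
With `uᵢ = bᵢλᵢ/aᵢ` the map is `F(c) = c² / ((c + u₁)(c + u₂))`, and since `c_S + c_L = 1 - u₁ - u₂`
and `c_S c_L = u₁ u₂`, its denominator is `c² + (1 - c_S - c_L) c + c_S c_L`; hence
`c - F(c) = c (c - c_S)(c - c_L) / ((c + u₁)(c + u₂))`. As `F` is increasing on `[0, ∞)` and fixes
`c_S` and `c_L`, it preserves each of `(0, c_S)`, `(c_S, c_L]` and `(c_L, ∞)`, on which the orbit is
decreasing, increasing and decreasing respectively. A bounded orbit above `c_S` converges to a fixed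
point above `c_S`, which can only be `c_L`; an orbit below `c_S` stays below `c₀ < c_S ≤ c_L`.
-/

open Filter Topology Set Function

lemma eq_iterate_of_succ {α : Type*} {f : α → α} {x : ℕ → α} (hx : ∀ n, x (n + 1) = f (x n)) :
    x = fun n => f^[n] (x 0) := by
  funext n
  induction n with
  | zero => rfl
  | succ n ih => rw [hx, ih, iterate_succ_apply']

/-- `twoPairF` written through its fixed points `s` and `L`. -/
noncomputable def rootMap (s L c : ℝ) : ℝ := c ^ 2 / (c ^ 2 + (1 - s - L) * c + s * L)

structure RootPair (s L : ℝ) : Prop where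
  pos : 0 < s
  le : s ≤ L
  add_le_one : s + L ≤ 1

namespace RootPair

variable {s L c x : ℝ}

lemma denom_pos (h : RootPair s L) (hc : 0 ≤ c) : 0 < c ^ 2 + (1 - s - L) * c + s * L := by
  have hsL : 0 ≤ 1 - s - L := by linarith [h.add_le_one]
  exact add_pos_of_nonneg_of_pos (add_nonneg (sq_nonneg c) (mul_nonneg hsL hc))
    (mul_pos h.pos (h.pos.trans_le h.le))

lemma self_sub_rootMap (h : RootPair s L) (hc : 0 ≤ c) :
    c - rootMap s L c = c * (c - s) * (c - L) / (c ^ 2 + (1 - s - L) * c + s * L) := by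
  rw [rootMap, eq_div_iff (h.denom_pos hc).ne', sub_mul, div_mul_cancel₀ _ (h.denom_pos hc).ne']
  ring

lemma rootMap_lt_self_iff (h : RootPair s L) (hc : 0 < c) :
    rootMap s L c < c ↔ 0 < (c - s) * (c - L) := by
  rw [← sub_pos, h.self_sub_rootMap hc.le, div_pos_iff_of_pos_right (h.denom_pos hc.le), mul_assoc,
    mul_pos_iff_of_pos_left hc]

lemma isFixedPt_iff (h : RootPair s L) (hc : 0 < c) :
    IsFixedPt (rootMap s L) c ↔ c = s ∨ c = L := by
  rw [IsFixedPt, eq_comm, ← sub_eq_zero, h.self_sub_rootMap hc.le, div_eq_zero_iff,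
    or_iff_left (h.denom_pos hc.le).ne', mul_eq_zero, mul_eq_zero, or_iff_right hc.ne', sub_eq_zero,
    sub_eq_zero]

lemma isFixedPt_left (h : RootPair s L) : IsFixedPt (rootMap s L) s :=
  (h.isFixedPt_iff h.pos).2 (Or.inl rfl)

lemma isFixedPt_right (h : RootPair s L) : IsFixedPt (rootMap s L) L :=
  (h.isFixedPt_iff (h.pos.trans_le h.le)).2 (Or.inr rfl)

lemma eq_of_isFixedPt (h : RootPair s L) (hc : s < c) (hfix : IsFixedPt (rootMap s L) c) :
    c = L :=
  ((h.isFixedPt_iff (h.pos.trans hc)).1 hfix).resolve_left hc.ne'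

lemma strictMonoOn (h : RootPair s L) : StrictMonoOn (rootMap s L) (Ici 0) := by
  intro x (hx : 0 ≤ x) y (hy : 0 ≤ y) hxy
  rw [rootMap, rootMap, div_lt_div_iff₀ (h.denom_pos hx) (h.denom_pos hy), ← sub_pos]
  have hsL : 0 ≤ 1 - s - L := by linarith [h.add_le_one]
  calc 0 < (y - x) * ((1 - s - L) * x * y + s * L * (x + y)) :=
        mul_pos (sub_pos.2 hxy) (add_pos_of_nonneg_of_pos (by positivity)
          (mul_pos (mul_pos h.pos (h.pos.trans_le h.le)) (by linarith)))
    _ = _ := by ring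

lemma continuousAt (h : RootPair s L) (hc : 0 ≤ c) : ContinuousAt (rootMap s L) c :=
  ContinuousAt.div (by fun_prop) (by fun_prop) (h.denom_pos hc).ne'

lemma rootMap_pos (h : RootPair s L) (hc : 0 < c) : 0 < rootMap s L c :=
  div_pos (by positivity) (h.denom_pos hc.le)

lemma mapsTo_Ioo (h : RootPair s L) : MapsTo (rootMap s L) (Ioo 0 s) (Ioo 0 s) := fun c hc => by
  refine ⟨h.rootMap_pos hc.1, ?_⟩
  calc rootMap s L c < rootMap s L s := h.strictMonoOn hc.1.le h.pos.le hc.2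
    _ = s := h.isFixedPt_left

lemma mapsTo_Ioc (h : RootPair s L) : MapsTo (rootMap s L) (Ioc s L) (Ioc s L) := fun c hc => by
  have hc₀ : (0 : ℝ) ≤ c := h.pos.le.trans hc.1.le
  constructor
  · calc s = rootMap s L s := h.isFixedPt_left.symm
      _ < rootMap s L c := h.strictMonoOn h.pos.le hc₀ hc.1
  · calc rootMap s L c ≤ rootMap s L L := (h.strictMonoOn.le_iff_le hc₀ (hc₀.trans hc.2)).2 hc.2
      _ = L := h.isFixedPt_right

lemma mapsTo_Ioi (h : RootPair s L) : MapsTo (rootMap s L) (Ioi L) (Ioi L) := fun c hc => by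
  have hL : (0 : ℝ) ≤ L := h.pos.le.trans h.le
  calc L = rootMap s L L := h.isFixedPt_right.symm
    _ < rootMap s L c := h.strictMonoOn hL (hL.trans (le_of_lt hc)) hc

lemma eq_of_tendsto_iterate (h : RootPair s L) {a : ℝ}
    (hlim : Tendsto (fun n => (rootMap s L)^[n] x) atTop (𝓝 a)) (ha : s < a) : a = L :=
  h.eq_of_isFixedPt ha (isFixedPt_of_tendsto_iterate hlim (h.continuousAt (h.pos.trans ha).le))

lemma tendsto_iterate_of_mem_Ioc (h : RootPair s L) (hx : x ∈ Ioc s L) :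
    Tendsto (fun n => (rootMap s L)^[n] x) atTop (𝓝 L) := by
  have hmem n : (rootMap s L)^[n] x ∈ Ioc s L := h.mapsTo_Ioc.iterate n hx
  have hmono : Monotone fun n => (rootMap s L)^[n] x := monotone_nat_of_le_succ fun n => by
    have hc := hmem n
    rw [iterate_succ_apply', ← not_lt, h.rootMap_lt_self_iff (h.pos.trans hc.1), not_lt]
    exact mul_nonpos_of_nonneg_of_nonpos (sub_nonneg.2 hc.1.le) (sub_nonpos.2 hc.2)
  have hbdd : BddAbove (range fun n => (rootMap s L)^[n] x) :=
    ⟨L, forall_mem_range.2 fun n => (hmem n).2⟩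
  have hlim := tendsto_atTop_ciSup hmono hbdd
  rwa [h.eq_of_tendsto_iterate hlim (hx.1.trans_le (le_ciSup hbdd 0))] at hlim

lemma tendsto_iterate_of_lt (h : RootPair s L) (hx : L < x) :
    Tendsto (fun n => (rootMap s L)^[n] x) atTop (𝓝 L) := by
  have hmem n : L < (rootMap s L)^[n] x := h.mapsTo_Ioi.iterate n hx
  have hanti : Antitone fun n => (rootMap s L)^[n] x := antitone_nat_of_succ_le fun n => by
    have hc := hmem n
    rw [iterate_succ_apply']
    refine ((h.rootMap_lt_self_iff (h.pos.trans (h.le.trans_lt hc))).2 ?_).le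
    exact mul_pos (sub_pos.2 (h.le.trans_lt hc)) (sub_pos.2 hc)
  have hbdd : BddBelow (range fun n => (rootMap s L)^[n] x) :=
    ⟨L, forall_mem_range.2 fun n => (hmem n).le⟩
  have hlim := tendsto_atTop_ciInf hanti hbdd
  obtain hinf | hinf := (le_ciInf fun n => (hmem n).le : L ≤ ⨅ n, (rootMap s L)^[n] x).eq_or_lt
  · rwa [← hinf] at hlim
  · rwa [h.eq_of_tendsto_iterate hlim (h.le.trans_lt hinf)] at hlim

lemma tendsto_iterate (h : RootPair s L) (hx : s < x) :
    Tendsto (fun n => (rootMap s L)^[n] x) atTop (𝓝 L) := by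
  rcases le_or_gt x L with hxL | hxL
  · exact h.tendsto_iterate_of_mem_Ioc ⟨hx, hxL⟩
  · exact h.tendsto_iterate_of_lt hxL

lemma strictAnti_iterate (h : RootPair s L) (hx : x ∈ Ioo 0 s) :
    StrictAnti fun n => (rootMap s L)^[n] x := strictAnti_nat_of_succ_lt fun n => by
  have hc := h.mapsTo_Ioo.iterate n hx
  rw [iterate_succ_apply', h.rootMap_lt_self_iff hc.1]
  exact mul_pos_of_neg_of_neg (sub_neg.2 hc.2) (sub_neg.2 (hc.2.trans_le h.le))

lemma not_tendsto_iterate (h : RootPair s L) (hx : x ∈ Ioo 0 s) :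
    ¬Tendsto (fun n => (rootMap s L)^[n] x) atTop (𝓝 L) := fun hlim =>
  (hx.2.trans_le h.le).not_ge ((h.strictAnti_iterate hx).antitone.le_of_tendsto hlim 0)

end RootPair

section Parameters

variable {a₁ a₂ b₁ b₂ l₁ l₂ : ℝ}

lemma two_mul_sqrt_mul_sqrt_lt {u₁ u₂ : ℝ} (hu₁ : 0 ≤ u₁) (hu₂ : 0 ≤ u₂) (h : √u₁ + √u₂ < 1) :
    2 * √u₁ * √u₂ < 1 - u₁ - u₂ := by
  have := pow_lt_one₀ (add_nonneg (sqrt_nonneg u₁) (sqrt_nonneg u₂)) h two_ne_zero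
  nlinarith [sq_sqrt hu₁, sq_sqrt hu₂]

lemma twoPairD_pos (hu₁ : 0 ≤ b₁ * l₁ / a₁) (hu₂ : 0 ≤ b₂ * l₂ / a₂)
    (h : √(b₁ * l₁ / a₁) + √(b₂ * l₂ / a₂) < 1) : 0 < twoPairD a₁ a₂ b₁ b₂ l₁ l₂ := by
  have hlt := two_mul_sqrt_mul_sqrt_lt hu₁ hu₂ h
  have h₀ : 0 ≤ 2 * √(b₁ * l₁ / a₁) * √(b₂ * l₂ / a₂) := by positivity
  rw [twoPairD, sub_pos]
  calc 4 * (b₁ * l₁ / a₁) * (b₂ * l₂ / a₂) = (2 * √(b₁ * l₁ / a₁) * √(b₂ * l₂ / a₂)) ^ 2 := by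
        rw [mul_pow, mul_pow, sq_sqrt hu₁, sq_sqrt hu₂]; ring
    _ < (1 - b₁ * l₁ / a₁ - b₂ * l₂ / a₂) ^ 2 := pow_lt_pow_left₀ hlt h₀ two_ne_zero

lemma sqrt_twoPairD_lt (hu₁ : 0 < b₁ * l₁ / a₁) (hu₂ : 0 < b₂ * l₂ / a₂)
    (h : √(b₁ * l₁ / a₁) + √(b₂ * l₂ / a₂) < 1) :
    √(twoPairD a₁ a₂ b₁ b₂ l₁ l₂) < 1 - b₁ * l₁ / a₁ - b₂ * l₂ / a₂ := by
  have hm := (two_mul_sqrt_mul_sqrt_lt hu₁.le hu₂.le h).trans_le' (by positivity)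
  rw [sqrt_lt' hm, twoPairD]
  nlinarith [mul_pos hu₁ hu₂]

lemma rootPair_twoPairCS_twoPairCL (hu₁ : 0 < b₁ * l₁ / a₁) (hu₂ : 0 < b₂ * l₂ / a₂)
    (h : √(b₁ * l₁ / a₁) + √(b₂ * l₂ / a₂) < 1) :
    RootPair (twoPairCS a₁ a₂ b₁ b₂ l₁ l₂) (twoPairCL a₁ a₂ b₁ b₂ l₁ l₂) where
  pos := by rw [twoPairCS]; linarith [sqrt_twoPairD_lt hu₁ hu₂ h]
  le := by rw [twoPairCS, twoPairCL]; linarith [sqrt_nonneg (twoPairD a₁ a₂ b₁ b₂ l₁ l₂)]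
  add_le_one := by rw [twoPairCS, twoPairCL]; linarith

lemma twoPairF_eq_rootMap (ha₁ : a₁ ≠ 0) (ha₂ : a₂ ≠ 0) (hD : 0 ≤ twoPairD a₁ a₂ b₁ b₂ l₁ l₂)
    (c : ℝ) : twoPairF a₁ a₂ b₁ b₂ l₁ l₂ c =
      rootMap (twoPairCS a₁ a₂ b₁ b₂ l₁ l₂) (twoPairCL a₁ a₂ b₁ b₂ l₁ l₂) c := by
  have hsum : 1 - twoPairCS a₁ a₂ b₁ b₂ l₁ l₂ - twoPairCL a₁ a₂ b₁ b₂ l₁ l₂ =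
      b₁ * l₁ / a₁ + b₂ * l₂ / a₂ := by
    rw [twoPairCS, twoPairCL]; ring
  have hprod : twoPairCS a₁ a₂ b₁ b₂ l₁ l₂ * twoPairCL a₁ a₂ b₁ b₂ l₁ l₂ =
      b₁ * l₁ / a₁ * (b₂ * l₂ / a₂) := by
    rw [twoPairCS, twoPairCL, ← sub_eq_zero]
    ring_nf
    rw [sq_sqrt hD, twoPairD]
    ring
  have e₁ : a₁ * c + b₁ * l₁ = a₁ * (c + b₁ * l₁ / a₁) := by field_simp
  have e₂ : a₂ * c + b₂ * l₂ = a₂ * (c + b₂ * l₂ / a₂) := by field_simp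
  rw [twoPairF, e₁, e₂, mul_div_mul_left _ _ ha₁, mul_div_mul_left _ _ ha₂, div_mul_div_comm,
    rootMap, hsum, hprod]
  congr 1 <;> ring

end Parameters

theorem twoPair_iteration_dichotomy_general (a₁ a₂ b₁ b₂ l₁ l₂ : ℝ)
    (ha₁ : 0 < a₁) (ha₂ : 0 < a₂)
    (hb₁ : 0 < b₁) (hb₂ : 0 < b₂)
    (hl₁ : 0 < l₁) (hl₂ : 0 < l₂)
    (hcond : Real.sqrt (b₁ * l₁ / a₁) + Real.sqrt (b₂ * l₂ / a₂) < 1)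
    (c : ℕ → ℝ) (hc0 : 0 < c 0)
    (hrec : ∀ t, c (t + 1) = twoPairF a₁ a₂ b₁ b₂ l₁ l₂ (c t)) :
    (twoPairCS a₁ a₂ b₁ b₂ l₁ l₂ < c 0 →
      Filter.Tendsto c Filter.atTop (nhds (twoPairCL a₁ a₂ b₁ b₂ l₁ l₂))) ∧
    (c 0 < twoPairCS a₁ a₂ b₁ b₂ l₁ l₂ →
      StrictAnti c ∧ (∀ t, c t < twoPairCS a₁ a₂ b₁ b₂ l₁ l₂) ∧
      ¬ Filter.Tendsto c Filter.atTop (nhds (twoPairCL a₁ a₂ b₁ b₂ l₁ l₂))) := by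
  have hu₁ : 0 < b₁ * l₁ / a₁ := by positivity
  have hu₂ : 0 < b₂ * l₂ / a₂ := by positivity
  have hroots := rootPair_twoPairCS_twoPairCL hu₁ hu₂ hcond
  have hF : twoPairF a₁ a₂ b₁ b₂ l₁ l₂ = rootMap _ _ :=
    funext (twoPairF_eq_rootMap ha₁.ne' ha₂.ne' (twoPairD_pos hu₁.le hu₂.le hcond).le)
  rw [hF] at hrec
  rw [eq_iterate_of_succ hrec]
  refine ⟨hroots.tendsto_iterate, fun hs => ?_⟩
  exact ⟨hroots.strictAnti_iterate ⟨hc0, hs⟩, fun n => (hroots.mapsTo_Ioo.iterate n ⟨hc0, hs⟩).2,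
    hroots.not_tendsto_iterate ⟨hc0, hs⟩⟩

/-- Convergence dichotomy for the iteration `c_{t+1} = F(c_t)` (Lemma 1 of the paper):
if `c₀ > c_S` the iterates converge to the attracting fixed point `c_L`; if
`0 < c₀ < c_S` the iterates are strictly decreasing, stay below `c_S`, and hence
do not converge to `c_L`. -/
theorem twoPair_iteration_dichotomy (a₁ a₂ b₁ b₂ l₁ l₂ : ℝ)
    (ha₁ : 0 < a₁) (ha₁' : a₁ ≤ 1) (ha₂ : 0 < a₂) (ha₂' : a₂ ≤ 1)
    (hb₁ : 0 < b₁) (hb₁' : b₁ < 1) (hb₂ : 0 < b₂) (hb₂' : b₂ < 1)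
    (hl₁ : 0 < l₁) (hl₂ : 0 < l₂)
    (hcond : Real.sqrt (b₁ * l₁ / a₁) + Real.sqrt (b₂ * l₂ / a₂) < 1)
    (c : ℕ → ℝ) (hc0 : 0 < c 0)
    (hrec : ∀ t, c (t + 1) = twoPairF a₁ a₂ b₁ b₂ l₁ l₂ (c t)) :
    (twoPairCS a₁ a₂ b₁ b₂ l₁ l₂ < c 0 →
      Filter.Tendsto c Filter.atTop (nhds (twoPairCL a₁ a₂ b₁ b₂ l₁ l₂))) ∧
    (c 0 < twoPairCS a₁ a₂ b₁ b₂ l₁ l₂ →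
      StrictAnti c ∧ (∀ t, c t < twoPairCS a₁ a₂ b₁ b₂ l₁ l₂) ∧
      ¬ Filter.Tendsto c Filter.atTop (nhds (twoPairCL a₁ a₂ b₁ b₂ l₁ l₂))) :=
  twoPair_iteration_dichotomy_general a₁ a₂ b₁ b₂ l₁ l₂ ha₁ ha₂ hb₁ hb₂ hl₁ hl₂ hcond c hc0 hrec
end

section
/- Fix real parameters a₁, a₂ ∈ (0,1], b₁, b₂ ∈ (0,1), λ₁, λ₂ > 0, set u_i = b_iλ_i/a_i and assume √u₁ + √u₂ < 1. Then λ₁ < p_{1,L} if and only if ( (1 − b₁)λ₁/a₁ + b₂λ₂/a₂ < 1 − b₁ ) or ( (2 − b₁)λ₁/a₁ + b₂λ₂/a₂ < 1 ). -/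
open Real

/-!
`c_L` is the larger root of `c² − s c + u₁u₂` with `s = 1 − u₁ − u₂`, and `λ₁ < p_{1,L}` says
`t < c_L` for `t = (1 − b₁)λ₁/a₁`. A point lies below the larger root of a monic quadratic
exactly when it lies left of the vertex (`2t < s`, the second disjunct) or the quadratic is
negative there; and at this `t` the quadratic factors as
`(λ₁/a₁)((1 − b₁)λ₁/a₁ + u₂ − (1 − b₁))`, whose sign gives the first disjunct.
This holds even when the discriminant is negative, since then `√D = 0` and the quadratic is
positive everywhere.
-/

theorem Real.lt_sqrt_iff_neg_or_sq_lt {x y : ℝ} : x < √y ↔ x < 0 ∨ x ^ 2 < y := by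
  rcases lt_or_ge x 0 with hx | hx
  · exact iff_of_true (hx.trans_le (sqrt_nonneg y)) (Or.inl hx)
  · rw [lt_sqrt hx, or_iff_right hx.not_gt]

theorem lt_larger_quadratic_root_iff (s u v t : ℝ) :
    t < (s + √(s ^ 2 - 4 * u * v)) / 2 ↔ 2 * t < s ∨ t ^ 2 - s * t + u * v < 0 := by
  have hcentre : t < (s + √(s ^ 2 - 4 * u * v)) / 2 ↔ 2 * t - s < √(s ^ 2 - 4 * u * v) := by
    constructor <;> intro <;> linarith
  rw [hcentre, Real.lt_sqrt_iff_neg_or_sq_lt]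
  exact or_congr (by constructor <;> intro <;> linarith) (by constructor <;> intro <;> nlinarith)

theorem lt_larger_fixed_point_iff {b m n : ℝ} (hm : 0 < m) :
    (1 - b) * m < ((1 - b * m - n) + √((1 - b * m - n) ^ 2 - 4 * (b * m) * n)) / 2 ↔
      (1 - b) * m + n < 1 - b ∨ (2 - b) * m + n < 1 := by
  have hfactor : ((1 - b) * m) ^ 2 - (1 - b * m - n) * ((1 - b) * m) + b * m * n =
      m * ((1 - b) * m + n - (1 - b)) := by ring
  have hsign {x : ℝ} : m * x < 0 ↔ x < 0 :=
    ⟨fun h ↦ neg_of_mul_neg_right h hm.le, mul_neg_of_pos_of_neg hm⟩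
  rw [lt_larger_quadratic_root_iff, hfactor, hsign, or_comm]
  exact or_congr (by constructor <;> intro <;> linarith) (by constructor <;> intro <;> linarith)

theorem twoPair_stability_characterization_general (a₁ a₂ b₁ b₂ l₁ l₂ : ℝ)
    (ha₁ : 0 < a₁) (hl₁ : 0 < l₁) :
    l₁ < a₁ * twoPairCL a₁ a₂ b₁ b₂ l₁ l₂ + b₁ * l₁ ↔
      ((1 - b₁) * l₁ / a₁ + b₂ * l₂ / a₂ < 1 - b₁ ∨
        (2 - b₁) * l₁ / a₁ + b₂ * l₂ / a₂ < 1) := by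
  have hrate : l₁ < a₁ * twoPairCL a₁ a₂ b₁ b₂ l₁ l₂ + b₁ * l₁ ↔
      (1 - b₁) * l₁ / a₁ < twoPairCL a₁ a₂ b₁ b₂ l₁ l₂ := by
    rw [div_lt_iff₀ ha₁]
    constructor <;> intro <;> linarith
  rw [hrate, twoPairCL, twoPairD]
  simp only [mul_div_assoc]
  exact lt_larger_fixed_point_iff (div_pos hl₁ ha₁)

/-- Algebraic core of the paper's Theorem 3 (stability region for two pairs):
`λ₁ < p_{1,L}` iff `(1 − b₁)λ₁/a₁ + b₂λ₂/a₂ < 1 − b₁` or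
`(2 − b₁)λ₁/a₁ + b₂λ₂/a₂ < 1`, where `p_{1,L} = a₁ c_L + b₁ λ₁`. -/
theorem twoPair_stability_characterization (a₁ a₂ b₁ b₂ l₁ l₂ : ℝ)
    (ha₁ : 0 < a₁) (ha₁' : a₁ ≤ 1) (ha₂ : 0 < a₂) (ha₂' : a₂ ≤ 1)
    (hb₁ : 0 < b₁) (hb₁' : b₁ < 1) (hb₂ : 0 < b₂) (hb₂' : b₂ < 1)
    (hl₁ : 0 < l₁) (hl₂ : 0 < l₂)
    (hcond : Real.sqrt (b₁ * l₁ / a₁) + Real.sqrt (b₂ * l₂ / a₂) < 1) :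
    l₁ < a₁ * twoPairCL a₁ a₂ b₁ b₂ l₁ l₂ + b₁ * l₁ ↔
      ((1 - b₁) * l₁ / a₁ + b₂ * l₂ / a₂ < 1 - b₁ ∨
        (2 - b₁) * l₁ / a₁ + b₂ * l₂ / a₂ < 1) :=
  twoPair_stability_characterization_general a₁ a₂ b₁ b₂ l₁ l₂ ha₁ hl₁
end

section
/- Fix real parameters a₁, a₂ ∈ (0,1], b₁, b₂ ∈ (0,1), and λ₂ > 0. On the set of λ₁ > 0 for which √(b₁λ₁/a₁) + √(b₂λ₂/a₂) < 1, the function λ₁ ↦ c_L is strictly decreasing and the function λ₁ ↦ c_S is strictly increasing, where c_L = ((1 − u₁ − u₂) + √D)/2 and c_S = ((1 − u₁ − u₂) − √D)/2 with u_i = b_iλ_i/a_i and D = (1 − u₁ − u₂)² − 4u₁u₂. -/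
open Real

/-!
With `u = b₁λ₁/a₁` and `w = b₂λ₂/a₂`, the numbers `c_L ≥ c_S` are the roots of
`c² − (1 − u − w) c + u w`. Below the line `u + w = 1` the discriminant decreases in `u`,
so `c_L` decreases, being the sum of two decreasing terms. The condition `√u + √w < 1`
makes the discriminant nonnegative and `c_L` positive, so `c_S = u w / c_L` increases.
-/

namespace TwoPair

noncomputable def disc (u w : ℝ) : ℝ := (1 - u - w) ^ 2 - 4 * u * w

noncomputable def largeRoot (u w : ℝ) : ℝ := ((1 - u - w) + √(disc u w)) / 2

noncomputable def smallRoot (u w : ℝ) : ℝ := ((1 - u - w) - √(disc u w)) / 2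

def region (w : ℝ) : Set ℝ := {u | 0 < u ∧ √u + √w < 1}

variable {u v w : ℝ}

lemma add_lt_one_of_sqrt_add_sqrt_lt_one (hu : 0 ≤ u) (hw : 0 ≤ w) (h : √u + √w < 1) :
    u + w < 1 := by
  have hsq : (√u + √w) ^ 2 < 1 := by nlinarith [Real.sqrt_nonneg u, Real.sqrt_nonneg w]
  nlinarith [Real.sq_sqrt hu, Real.sq_sqrt hw, Real.sqrt_nonneg u, Real.sqrt_nonneg w]

/-- `D = (1 − (√u + √w)²)(1 − (√u − √w)²)`. -/
lemma disc_nonneg (hu : 0 ≤ u) (hw : 0 ≤ w) (h : √u + √w ≤ 1) : 0 ≤ disc u w := by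
  have hu' := Real.sq_sqrt hu
  have hw' := Real.sq_sqrt hw
  have hsum : 0 ≤ 1 - (√u + √w) ^ 2 := by nlinarith [Real.sqrt_nonneg u, Real.sqrt_nonneg w]
  have hdiff : 0 ≤ 1 - (√u - √w) ^ 2 := by nlinarith [Real.sqrt_nonneg u, Real.sqrt_nonneg w]
  have hfactor : disc u w = (1 - (√u + √w) ^ 2) * (1 - (√u - √w) ^ 2) := by
    rw [disc]
    conv_lhs => rw [← hu', ← hw']
    ring
  rw [hfactor]
  exact mul_nonneg hsum hdiff

lemma disc_strictAntiOn (hw : 0 ≤ w) : StrictAntiOn (disc · w) (Set.Iic (1 - w)) := by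
  intro u _ v hv huv
  have hv : v ≤ 1 - w := hv
  have hdiff : disc u w - disc v w = (v - u) * ((1 - u - w) + (1 - v - w) + 4 * w) := by
    simp only [disc]; ring
  have hpos : 0 < (v - u) * ((1 - u - w) + (1 - v - w) + 4 * w) :=
    mul_pos (sub_pos.mpr huv) (by linarith)
  linarith

lemma largeRoot_strictAntiOn (hw : 0 ≤ w) : StrictAntiOn (largeRoot · w) (Set.Iic (1 - w)) := by
  intro u hu v hv huv
  have hsqrt : √(disc v w) ≤ √(disc u w) :=
    Real.sqrt_le_sqrt (disc_strictAntiOn hw hu hv huv).le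
  simp only [largeRoot]
  linarith

lemma largeRoot_pos (h : u + w < 1) : 0 < largeRoot u w := by
  have := Real.sqrt_nonneg (disc u w)
  rw [largeRoot]
  linarith

lemma largeRoot_mul_smallRoot (hD : 0 ≤ disc u w) : largeRoot u w * smallRoot u w = u * w := by
  have hsq := Real.sq_sqrt hD
  rw [largeRoot, smallRoot, disc]
  rw [disc] at hsq
  linear_combination (-1 / 4 : ℝ) * hsq

lemma region_subset_Iic (hw : 0 ≤ w) : region w ⊆ Set.Iic (1 - w) := fun u ⟨hu, h⟩ => by
  have := add_lt_one_of_sqrt_add_sqrt_lt_one hu.le hw h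
  simp only [Set.mem_Iic]
  linarith

lemma largeRoot_strictAntiOn_region (hw : 0 ≤ w) : StrictAntiOn (largeRoot · w) (region w) :=
  (largeRoot_strictAntiOn hw).mono (region_subset_Iic hw)

lemma smallRoot_eq_div (hu : 0 ≤ u) (hw : 0 ≤ w) (h : √u + √w < 1) :
    smallRoot u w = u * w / largeRoot u w := by
  have hL := largeRoot_pos (add_lt_one_of_sqrt_add_sqrt_lt_one hu hw h)
  rw [eq_div_iff hL.ne', mul_comm, largeRoot_mul_smallRoot (disc_nonneg hu hw h.le)]

lemma smallRoot_strictMonoOn_region (hw : 0 < w) : StrictMonoOn (smallRoot · w) (region w) := by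
  intro u ⟨hu, hus⟩ v ⟨hv, hvs⟩ huv
  have hLv := largeRoot_pos (add_lt_one_of_sqrt_add_sqrt_lt_one hv.le hw.le hvs)
  have hL : largeRoot v w < largeRoot u w :=
    largeRoot_strictAntiOn_region hw.le ⟨hu, hus⟩ ⟨hv, hvs⟩ huv
  simp only [smallRoot_eq_div hu.le hw.le hus, smallRoot_eq_div hv.le hw.le hvs]
  exact div_lt_div₀ (mul_lt_mul_of_pos_right huv hw) hL.le (by positivity) hLv

end TwoPair

theorem twoPair_roots_monotone_general (a₁ a₂ b₁ b₂ l₂ : ℝ)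
    (ha₁ : 0 < a₁) (ha₂ : 0 < a₂)
    (hb₁ : 0 < b₁) (hb₂ : 0 < b₂)
    (hl₂ : 0 < l₂) :
    StrictAntiOn (fun l₁ => twoPairCL a₁ a₂ b₁ b₂ l₁ l₂)
      {l₁ : ℝ | 0 < l₁ ∧
        Real.sqrt (b₁ * l₁ / a₁) + Real.sqrt (b₂ * l₂ / a₂) < 1} ∧
    StrictMonoOn (fun l₁ => twoPairCS a₁ a₂ b₁ b₂ l₁ l₂)
      {l₁ : ℝ | 0 < l₁ ∧
        Real.sqrt (b₁ * l₁ / a₁) + Real.sqrt (b₂ * l₂ / a₂) < 1} := by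
  have hw : 0 < b₂ * l₂ / a₂ := by positivity
  have hmono : StrictMono fun l₁ : ℝ => b₁ * l₁ / a₁ := fun x y hxy =>
    div_lt_div_of_pos_right (mul_lt_mul_of_pos_left hxy hb₁) ha₁
  have hmaps : Set.MapsTo (fun l₁ : ℝ => b₁ * l₁ / a₁)
      {l₁ : ℝ | 0 < l₁ ∧ Real.sqrt (b₁ * l₁ / a₁) + Real.sqrt (b₂ * l₂ / a₂) < 1}
      (TwoPair.region (b₂ * l₂ / a₂)) := fun l₁ ⟨hl₁, h⟩ => ⟨by positivity, h⟩
  exact ⟨(TwoPair.largeRoot_strictAntiOn_region hw.le).comp_strictMonoOn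
      (hmono.strictMonoOn _) hmaps,
    (TwoPair.smallRoot_strictMonoOn_region hw).comp (hmono.strictMonoOn _) hmaps⟩

/-- On the set of `λ₁ > 0` with `√(b₁λ₁/a₁) + √(b₂λ₂/a₂) < 1`, the map `λ₁ ↦ c_L`
is strictly decreasing and the map `λ₁ ↦ c_S` is strictly increasing. -/
theorem twoPair_roots_monotone (a₁ a₂ b₁ b₂ l₂ : ℝ)
    (ha₁ : 0 < a₁) (ha₁' : a₁ ≤ 1) (ha₂ : 0 < a₂) (ha₂' : a₂ ≤ 1)
    (hb₁ : 0 < b₁) (hb₁' : b₁ < 1) (hb₂ : 0 < b₂) (hb₂' : b₂ < 1)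
    (hl₂ : 0 < l₂) :
    StrictAntiOn (fun l₁ => twoPairCL a₁ a₂ b₁ b₂ l₁ l₂)
      {l₁ : ℝ | 0 < l₁ ∧
        Real.sqrt (b₁ * l₁ / a₁) + Real.sqrt (b₂ * l₂ / a₂) < 1} ∧
    StrictMonoOn (fun l₁ => twoPairCS a₁ a₂ b₁ b₂ l₁ l₂)
      {l₁ : ℝ | 0 < l₁ ∧
        Real.sqrt (b₁ * l₁ / a₁) + Real.sqrt (b₂ * l₂ / a₂) < 1} :=
  twoPair_roots_monotone_general a₁ a₂ b₁ b₂ l₂ ha₁ ha₂ hb₁ hb₂ hl₂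
end

section
/- Fix an integer K ≥ 2 and reals θ > 0, ρ > 0, λ > 0; set a = Kθ/(θ+1) and C = exp(−θ/ρ). The equation p = C·exp(−aλ/p) has exactly two distinct solutions in (0, ∞) if and only if 0 < λ < (θ+1)/(Kθ)·exp(−1 − θ/ρ). -/
open Real

/-- The symmetric fixed-point map `G(p) = exp(−θ/ρ) · exp(−(Kθ/(θ+1))·λ/p)` for
`K` symmetric transmitter–receiver pairs. -/
noncomputable def symG (K : ℕ) (θ ρ lam p : ℝ) : ℝ :=
  Real.exp (-(θ / ρ)) * Real.exp (-((K : ℝ) * θ / (θ + 1) * lam / p))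

/-!
With `b = aλ`, the substitution `x = b / p` turns `p = C·exp(−b/p)` into
`log x − x = log b − log C`. The function `log x − x` increases strictly on `(0, 1]`,
decreases strictly on `[1, ∞)`, tends to `−∞` at both ends and attains its maximum `−1`
at `x = 1`; so the equation has exactly two positive solutions iff `log b − log C < −1`,
that is, iff `aλ < C / e`.
-/

open Set

theorem Set.exists_pair_iff_encard_setOf_eq_two {α : Type*} (Q P : α → Prop) :
    (∃ p q, Q p ∧ Q q ∧ p ≠ q ∧ P p ∧ P q ∧ ∀ r, Q r → P r → r = p ∨ r = q) ↔
      {r | Q r ∧ P r}.encard = 2 := by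
  rw [encard_eq_two]
  constructor
  · rintro ⟨p, q, hQp, hQq, hpq, hPp, hPq, hall⟩
    refine ⟨p, q, hpq, Set.ext fun r => ⟨fun hr => hall r hr.1 hr.2, ?_⟩⟩
    rintro (rfl | rfl)
    exacts [⟨hQp, hPp⟩, ⟨hQq, hPq⟩]
  · rintro ⟨p, q, hpq, hs⟩
    have hp : Q p ∧ P p := (hs ▸ mem_insert p {q} : p ∈ {r | Q r ∧ P r})
    have hq : Q q ∧ P q := (hs ▸ mem_insert_of_mem p rfl : q ∈ {r | Q r ∧ P r})
    exact ⟨p, q, hp.1, hq.1, hpq, hp.2, hq.2, fun r hQ hP =>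
      (show r ∈ ({p, q} : Set α) from hs ▸ ⟨hQ, hP⟩)⟩

theorem div_right_injective₀ {G₀ : Type*} [GroupWithZero G₀] {b : G₀} (hb : b ≠ 0) :
    Function.Injective (b / ·) := fun _ _ h =>
  inv_injective <| mul_right_injective₀ hb <| by simpa only [div_eq_mul_inv] using h

namespace Real

theorem log_sub_log_lt_div {x y : ℝ} (hx : 0 < x) (hy : 0 < y) (hne : y ≠ x) :
    log y - log x < (y - x) / x := by
  have h := log_lt_sub_one_of_pos (div_pos hy hx) (by rwa [ne_eq, div_eq_one_iff_eq hx.ne'])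
  rwa [log_div hy.ne' hx.ne', div_sub_one hx.ne'] at h

theorem strictMonoOn_log_sub_self : StrictMonoOn (fun x => log x - x) (Ioc 0 1) := by
  intro x ⟨hx, _⟩ y ⟨hy, hy1⟩ hxy
  have h := log_sub_log_lt_div hy hx hxy.ne
  have : (x - y) / y ≤ x - y := by rw [div_le_iff₀ hy]; nlinarith
  dsimp only
  linarith

theorem strictAntiOn_log_sub_self : StrictAntiOn (fun x => log x - x) (Ici 1) := by
  intro x (hx1 : 1 ≤ x) y _ hxy
  have h := log_sub_log_lt_div (by linarith) (by linarith) hxy.ne'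
  have : (y - x) / x ≤ y - x := div_le_self (by linarith) hx1
  dsimp only
  linarith

theorem continuousOn_log_sub_self {s : Set ℝ} (hs : ∀ x ∈ s, x ≠ 0) :
    ContinuousOn (fun x => log x - x) s :=
  (continuousOn_log.mono hs).sub continuousOn_id

theorem two_mul_lt_exp (t : ℝ) : 2 * t < exp t := by
  rcases le_or_gt 0 t with ht | ht
  · nlinarith [quadratic_le_exp_of_nonneg ht, sq_nonneg (t - 1)]
  · linarith [exp_pos t]

theorem exists_mem_Ioo_log_sub_self_eq {d : ℝ} (hd : d < -1) :
    ∃ x ∈ Ioo 0 1, log x - x = d := by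
  have hcont : ContinuousOn (fun x => log x - x) (Icc (exp d) 1) :=
    continuousOn_log_sub_self fun x hx => ((exp_pos d).trans_le hx.1).ne'
  have hd_mem : d ∈ Icc (log (exp d) - exp d) (log 1 - 1) := by
    rw [log_exp, log_one]
    exact ⟨by linarith [exp_pos d], by linarith⟩
  obtain ⟨x, ⟨hdx, hx1⟩, hx⟩ :=
    intermediate_value_Icc (exp_le_one_iff.mpr (by linarith)) hcont hd_mem
  refine ⟨x, ⟨(exp_pos d).trans_le hdx, hx1.lt_of_ne ?_⟩, hx⟩
  rintro rfl
  simp only [log_one] at hx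
  linarith

theorem exists_mem_Ioi_log_sub_self_eq {d : ℝ} (hd : d < -1) :
    ∃ y ∈ Ioi 1, log y - y = d := by
  have hcont : ContinuousOn (fun y => log y - y) (Icc 1 (exp (-d))) :=
    continuousOn_log_sub_self fun y hy => (one_pos.trans_le hy.1).ne'
  have hd_mem : d ∈ Icc (log (exp (-d)) - exp (-d)) (log 1 - 1) := by
    rw [log_exp, log_one]
    exact ⟨by linarith [two_mul_lt_exp (-d)], by linarith⟩
  obtain ⟨y, ⟨hy1, -⟩, hy⟩ :=
    intermediate_value_Icc' (one_le_exp (by linarith)) hcont hd_mem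
  refine ⟨y, hy1.lt_of_ne' ?_, hy⟩
  rintro rfl
  simp only [log_one] at hy
  linarith

theorem encard_setOf_log_sub_self_eq_two_iff (d : ℝ) :
    {x : ℝ | 0 < x ∧ log x - x = d}.encard = 2 ↔ d < -1 := by
  constructor
  · intro h2
    by_contra! hd
    have hsub : {x : ℝ | 0 < x ∧ log x - x = d} ⊆ {1} := by
      rintro x ⟨hx, rfl⟩
      by_contra hx1
      linarith [log_lt_sub_one_of_pos hx hx1]
    have h1 := encard_le_one_iff_subsingleton.mpr (subsingleton_singleton.anti hsub)
    rw [h2] at h1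
    exact absurd h1 (by norm_num)
  · intro hd
    obtain ⟨x, ⟨hx0, hx1⟩, hx⟩ := exists_mem_Ioo_log_sub_self_eq hd
    obtain ⟨y, hy1 : 1 < y, hy⟩ := exists_mem_Ioi_log_sub_self_eq hd
    suffices {z : ℝ | 0 < z ∧ log z - z = d} = {x, y} by
      rw [this, encard_pair (hx1.trans hy1).ne]
    ext z
    refine ⟨fun ⟨hz, hzd⟩ => ?_, ?_⟩
    · rcases le_or_gt z 1 with hz1 | hz1
      · exact Or.inl <|
          strictMonoOn_log_sub_self.injOn ⟨hz, hz1⟩ ⟨hx0, hx1.le⟩ (hzd.trans hx.symm)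
      · exact Or.inr <| strictAntiOn_log_sub_self.injOn (mem_Ici.mpr hz1.le)
          (mem_Ici.mpr hy1.le) (hzd.trans hy.symm)
    · rintro (rfl | rfl)
      exacts [⟨hx0, hx⟩, ⟨by linarith, hy⟩]

theorem eq_mul_exp_neg_div_iff {b C p : ℝ} (hb : 0 < b) (hC : 0 < C) (hp : 0 < p) :
    p = C * exp (-(b / p)) ↔ log (b / p) - b / p = log b - log C := by
  rw [log_div hb.ne' hp.ne']
  constructor
  · intro h
    have hlog := congrArg log h
    rw [log_mul hC.ne' (exp_pos _).ne', log_exp] at hlog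
    linarith
  · intro h
    have hlog : log p = log C + -(b / p) := by linarith
    calc p = exp (log p) := (exp_log hp).symm
      _ = C * exp (-(b / p)) := by rw [hlog, exp_add, exp_log hC]

theorem setOf_eq_mul_exp_neg_div_eq_image {b C : ℝ} (hb : 0 < b) (hC : 0 < C) :
    {p : ℝ | 0 < p ∧ p = C * exp (-(b / p))} =
      (b / ·) '' {x | 0 < x ∧ log x - x = log b - log C} := by
  ext p
  constructor
  · rintro ⟨hp, hpC⟩
    exact ⟨b / p, ⟨div_pos hb hp, (eq_mul_exp_neg_div_iff hb hC hp).mp hpC⟩,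
      div_div_cancel₀ hb.ne'⟩
  · rintro ⟨x, ⟨hx, hxd⟩, rfl⟩
    refine ⟨div_pos hb hx, (eq_mul_exp_neg_div_iff hb hC (div_pos hb hx)).mpr ?_⟩
    rwa [div_div_cancel₀ hb.ne']

end Real

theorem sym_two_solutions_iff_general (K : ℕ) (hK : 2 ≤ K) (θ ρ lam : ℝ)
    (hθ : 0 < θ) (hlam : 0 < lam) :
    (∃ p q : ℝ, 0 < p ∧ 0 < q ∧ p ≠ q ∧
        p = symG K θ ρ lam p ∧ q = symG K θ ρ lam q ∧
        ∀ r : ℝ, 0 < r → r = symG K θ ρ lam r → r = p ∨ r = q) ↔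
      lam < (θ + 1) / ((K : ℝ) * θ) * Real.exp (-1 - θ / ρ) := by
  have hK0 : (0 : ℝ) < K := by exact_mod_cast (by omega : 0 < K)
  have ha : (0 : ℝ) < K * θ / (θ + 1) := by positivity
  have hb : (0 : ℝ) < K * θ / (θ + 1) * lam := by positivity
  have hthreshold : (θ + 1) / ((K : ℝ) * θ) * exp (-1 - θ / ρ) =
      exp (-1 - θ / ρ) / (K * θ / (θ + 1)) := by
    field_simp
  rw [Set.exists_pair_iff_encard_setOf_eq_two (0 < ·) (fun p => p = symG K θ ρ lam p)]
  simp only [symG]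
  rw [setOf_eq_mul_exp_neg_div_eq_image hb (exp_pos _),
    (div_right_injective₀ hb.ne').injOn.encard_image, encard_setOf_log_sub_self_eq_two_iff,
    log_exp, sub_neg_eq_add, ← lt_sub_iff_add_lt, log_lt_iff_lt_exp hb, hthreshold,
    lt_div_iff₀' ha]

/-- The equation `p = C·exp(−aλ/p)` (with `a = Kθ/(θ+1)`, `C = exp(−θ/ρ)`) has exactly
two distinct positive solutions iff `λ < (θ+1)/(Kθ)·exp(−1 − θ/ρ)`. -/
theorem sym_two_solutions_iff (K : ℕ) (hK : 2 ≤ K) (θ ρ lam : ℝ)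
    (hθ : 0 < θ) (hρ : 0 < ρ) (hlam : 0 < lam) :
    (∃ p q : ℝ, 0 < p ∧ 0 < q ∧ p ≠ q ∧
        p = symG K θ ρ lam p ∧ q = symG K θ ρ lam q ∧
        ∀ r : ℝ, 0 < r → r = symG K θ ρ lam r → r = p ∨ r = q) ↔
      lam < (θ + 1) / ((K : ℝ) * θ) * Real.exp (-1 - θ / ρ) :=
  sym_two_solutions_iff_general K hK θ ρ lam hθ hlam
end

section
/- Fix an integer K ≥ 2 and reals θ > 0, ρ > 0, and λ with 0 < λ < (θ+1)/(Kθ)·exp(−1 − θ/ρ); set a = Kθ/(θ+1) and C = exp(−θ/ρ), and let p_S < p_L be the two solutions in (0, ∞) of p = C·exp(−aλ/p). Then p_S < Kθλ/(θ+1) < p_L. -/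
open Real

/-!
Taking logarithms, the fixed points of `symG` are the solutions of `log p + m / p = -θ/ρ` with
`m = Kθλ/(θ+1)`. Since `p ↦ log p + m / p` has derivative `(p - m) / p²`, it is strictly
decreasing on `(0, m]` and strictly increasing on `[m, ∞)`, so it takes each value at most once
on either side of `m`: two distinct solutions lie on opposite sides of `m`.
-/

open Set

theorem strictAntiOn_log_add_div (m : ℝ) : StrictAntiOn (fun p ↦ log p + m / p) (Ioc 0 m) := by
  rintro x ⟨hx, -⟩ y ⟨hy, hym⟩ hxy
  have hlog : log y - log x < y / x - 1 := by
    rw [← log_div hy.ne' hx.ne']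
    exact log_lt_sub_one_of_pos (div_pos hy hx) (by rw [Ne, div_eq_one_iff_eq hx.ne']; exact hxy.ne')
  have hdiv : y / x - 1 ≤ m / x - m / y := by
    rw [div_sub_one hx.ne', div_sub_div _ _ hx.ne' hy.ne', div_le_div_iff₀ hx (mul_pos hx hy)]
    nlinarith [mul_nonneg (mul_nonneg (sub_nonneg.2 hxy.le) hx.le) (sub_nonneg.2 hym)]
  show log y + m / y < log x + m / x
  linarith

theorem strictMonoOn_log_add_div (m : ℝ) :
    StrictMonoOn (fun p ↦ log p + m / p) (Ici m ∩ Ioi 0) := by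
  rintro x ⟨hmx, hx⟩ y ⟨-, hy⟩ hxy
  have hlog : log x - log y < x / y - 1 := by
    rw [← log_div hx.ne' hy.ne']
    exact log_lt_sub_one_of_pos (div_pos hx hy) (by rw [Ne, div_eq_one_iff_eq hy.ne']; exact hxy.ne)
  have hdiv : m / x - m / y ≤ 1 - x / y := by
    rw [one_sub_div hy.ne', div_sub_div _ _ hx.ne' hy.ne', div_le_div_iff₀ (mul_pos hx hy) hy]
    nlinarith [mul_nonneg (mul_nonneg (sub_nonneg.2 hxy.le) hy.le) (sub_nonneg.2 hmx)]
  show log x + m / x < log y + m / y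
  linarith

theorem log_add_div_of_eq_symG {K : ℕ} {θ ρ lam p : ℝ} (h : p = symG K θ ρ lam p) :
    log p + (K : ℝ) * θ * lam / (θ + 1) / p = -(θ / ρ) := by
  have hlog := congrArg log h
  rw [symG, ← exp_add, log_exp] at hlog
  rw [hlog]
  ring

theorem sym_solutions_straddle_general (K : ℕ) (θ ρ lam : ℝ)
    (pS pL : ℝ) (hpS : 0 < pS) (hpSL : pS < pL)
    (hfixS : pS = symG K θ ρ lam pS) (hfixL : pL = symG K θ ρ lam pL) :
    pS < (K : ℝ) * θ * lam / (θ + 1) ∧ (K : ℝ) * θ * lam / (θ + 1) < pL := by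
  set m : ℝ := (K : ℝ) * θ * lam / (θ + 1)
  have hpL : 0 < pL := hpS.trans hpSL
  have hsame : log pS + m / pS = log pL + m / pL :=
    (log_add_div_of_eq_symG hfixS).trans (log_add_div_of_eq_symG hfixL).symm
  constructor
  · by_contra! hmS
    exact (strictMonoOn_log_add_div m ⟨hmS, hpS⟩ ⟨hmS.trans hpSL.le, hpL⟩ hpSL).ne hsame
  · by_contra! hLm
    exact (strictAntiOn_log_add_div m ⟨hpS, hpSL.le.trans hLm⟩ ⟨hpL, hLm⟩ hpSL).ne' hsame

/-- The two positive solutions `p_S < p_L` of `p = C·exp(−aλ/p)` straddle `Kθλ/(θ+1)`: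
`p_S < Kθλ/(θ+1) < p_L`. -/
theorem sym_solutions_straddle (K : ℕ) (hK : 2 ≤ K) (θ ρ lam : ℝ)
    (hθ : 0 < θ) (hρ : 0 < ρ) (hlam : 0 < lam)
    (hlam' : lam < (θ + 1) / ((K : ℝ) * θ) * Real.exp (-1 - θ / ρ))
    (pS pL : ℝ) (hpS : 0 < pS) (hpSL : pS < pL)
    (hfixS : pS = symG K θ ρ lam pS) (hfixL : pL = symG K θ ρ lam pL) :
    pS < (K : ℝ) * θ * lam / (θ + 1) ∧ (K : ℝ) * θ * lam / (θ + 1) < pL :=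
  sym_solutions_straddle_general K θ ρ lam pS pL hpS hpSL hfixS hfixL
end

section
/- Fix an integer K ≥ 2 and reals θ > 0, ρ > 0, and λ with 0 < λ < (θ+1)/(Kθ)·exp(−1 − θ/ρ); set a = Kθ/(θ+1) and C = exp(−θ/ρ), and let p_S < p_L be the two solutions in (0, ∞) of p = C·exp(−aλ/p). Let q ∈ (0,1] and let (p_t)_{t≥0} be any sequence with p₀ > 0 satisfying p_{t+1} = C·exp(−a·min(λ/p_t, q)). If q < λ/p_S, then p_t > p_S for all t ≥ 1. -/
open Real

theorem symG_eq_mul_exp (K : ℕ) (θ ρ lam p : ℝ) :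
    symG K θ ρ lam p = exp (-(θ / ρ)) * exp (-((K : ℝ) * θ / (θ + 1) * (lam / p))) := by
  rw [symG, mul_div_assoc]

theorem exp_neg_mul_lt_exp_neg_mul {a x y : ℝ} (ha : 0 < a) (hxy : x < y) :
    exp (-(a * y)) < exp (-(a * x)) :=
  exp_lt_exp.2 (neg_lt_neg (mul_lt_mul_of_pos_left hxy ha))

theorem lt_mul_exp_of_eq_symG {K : ℕ} (hK : 0 < K) {θ ρ lam pS m : ℝ} (hθ : 0 < θ)
    (hfix : pS = symG K θ ρ lam pS) (hm : m < lam / pS) :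
    pS < exp (-(θ / ρ)) * exp (-((K : ℝ) * θ / (θ + 1) * m)) := by
  have ha : 0 < (K : ℝ) * θ / (θ + 1) := by positivity
  calc pS = exp (-(θ / ρ)) * exp (-((K : ℝ) * θ / (θ + 1) * (lam / pS))) := by
        rw [← symG_eq_mul_exp]; exact hfix
    _ < exp (-(θ / ρ)) * exp (-((K : ℝ) * θ / (θ + 1) * m)) :=
        mul_lt_mul_of_pos_left (exp_neg_mul_lt_exp_neg_mul ha hm) (exp_pos _)

theorem sym_stay_above_repelling_general (K : ℕ) (hK : 2 ≤ K) (θ ρ lam : ℝ)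
    (hθ : 0 < θ) (pS : ℝ) (hfixS : pS = symG K θ ρ lam pS) (q : ℝ) (hqS : q < lam / pS)
    (p : ℕ → ℝ)
    (hrec : ∀ t, p (t + 1) =
      Real.exp (-(θ / ρ)) *
        Real.exp (-((K : ℝ) * θ / (θ + 1) * min (lam / p t) q))) :
    ∀ t, 1 ≤ t → pS < p t := by
  intro t ht
  obtain ⟨s, rfl⟩ : ∃ s, t = s + 1 := ⟨t - 1, by omega⟩
  rw [hrec]
  exact lt_mul_exp_of_eq_symG (by omega) hθ hfixS ((min_le_right _ _).trans_lt hqS)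

/-- Sufficiency direction of the paper's Lemma 3: for the recursion
`p_{t+1} = C·exp(−a·min(λ/p_t, q))` with `q < λ/p_S`, all iterates from `t ≥ 1`
stay strictly above the repelling fixed point `p_S`. -/
theorem sym_stay_above_repelling (K : ℕ) (hK : 2 ≤ K) (θ ρ lam : ℝ)
    (hθ : 0 < θ) (hρ : 0 < ρ) (hlam : 0 < lam)
    (hlam' : lam < (θ + 1) / ((K : ℝ) * θ) * Real.exp (-1 - θ / ρ))
    (pS pL : ℝ) (hpS : 0 < pS) (hpSL : pS < pL)
    (hfixS : pS = symG K θ ρ lam pS) (hfixL : pL = symG K θ ρ lam pL)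
    (q : ℝ) (hq : 0 < q) (hq' : q ≤ 1) (hqS : q < lam / pS)
    (p : ℕ → ℝ) (hp0 : 0 < p 0)
    (hrec : ∀ t, p (t + 1) =
      Real.exp (-(θ / ρ)) *
        Real.exp (-((K : ℝ) * θ / (θ + 1) * min (lam / p t) q))) :
    ∀ t, 1 ≤ t → pS < p t :=
  sym_stay_above_repelling_general K hK θ ρ lam hθ pS hfixS q hqS p hrec
end

section
/- Fix an integer K ≥ 2 and reals θ > 0 and ρ > 0 with θ·(K−1) ≥ 1. Then for every λ with 0 < λ < (θ+1)/(Kθ)·exp(−1 − θ/ρ), the larger solution p_L of the equation p = exp(−θ/ρ)·exp(−Kθλ/((θ+1)p)) in (0, ∞) satisfies λ < p_L. -/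
open Real

open Set

/- With `a = Kθ/(θ+1)` and `C = exp(−θ/ρ)`, the hypothesis `θ(K−1) ≥ 1` says `a ≥ 1`. At
`p₀ = aλ` the map gives `G(p₀) = C/e`, which exceeds `p₀` by the bound on `λ`, while
`G(C) < C`. The intermediate value theorem yields a fixed point in `(p₀, C)`, so the largest
fixed point satisfies `p_L > p₀ = aλ ≥ λ`. -/

theorem exists_fixedPoint_mem_Ioo {f : ℝ → ℝ} {u v : ℝ} (huv : u ≤ v)
    (hf : ContinuousOn f (Icc u v)) (hu : u < f u) (hv : f v < v) :
    ∃ x ∈ Ioo u v, f x = x := by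
  have hsub : ContinuousOn (fun p => f p - p) (Icc u v) := hf.sub continuousOn_id
  obtain ⟨x, hx, hx0⟩ := intermediate_value_Icc' huv hsub
    (show (0 : ℝ) ∈ Icc (f v - v) (f u - u) from ⟨by linarith, by linarith⟩)
  have hfx : f x = x := sub_eq_zero.mp hx0
  refine ⟨x, ⟨lt_of_le_of_ne hx.1 ?_, lt_of_le_of_ne hx.2 ?_⟩, hfx⟩
  · rintro rfl; linarith
  · rintro rfl; linarith

section symG

variable (K : ℕ) (θ ρ lam : ℝ)

theorem continuousOn_symG : ContinuousOn (symG K θ ρ lam) (Ioi 0) := by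
  unfold symG
  refine continuousOn_const.mul (continuous_exp.comp_continuousOn ?_)
  exact (continuousOn_const.div continuousOn_id fun p hp => (mem_Ioi.mp hp).ne').neg

theorem symG_coupling_mul (h : (K : ℝ) * θ / (θ + 1) * lam ≠ 0) :
    symG K θ ρ lam ((K : ℝ) * θ / (θ + 1) * lam) = exp (-1 - θ / ρ) := by
  rw [symG, div_self h, ← exp_add]
  ring_nf

theorem symG_lt_exp {p : ℝ} (hp : 0 < p) (hlam : 0 < (K : ℝ) * θ / (θ + 1) * lam) :
    symG K θ ρ lam p < exp (-(θ / ρ)) := by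
  unfold symG
  refine mul_lt_of_lt_one_right (exp_pos _) (exp_lt_one_iff.mpr ?_)
  exact neg_neg_of_pos (div_pos hlam hp)

end symG

theorem sym_stability_large_theta_general (K : ℕ) (θ ρ : ℝ)
    (hθ : 0 < θ) (hθK : 1 ≤ θ * ((K : ℝ) - 1))
    (lam : ℝ) (hlam : 0 < lam)
    (hlam' : lam < (θ + 1) / ((K : ℝ) * θ) * Real.exp (-1 - θ / ρ))
    (pL : ℝ)
    (hmax : ∀ p : ℝ, 0 < p → p = symG K θ ρ lam p → p ≤ pL) :
    lam < pL := by
  set a : ℝ := (K : ℝ) * θ / (θ + 1)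
  set C : ℝ := exp (-(θ / ρ))
  have hθ1 : 0 < θ + 1 := by linarith
  have ha : 1 ≤ a := by rw [le_div_iff₀ hθ1]; linarith
  have hp₀ : 0 < a * lam := mul_pos (by linarith) hlam
  have hp₀_lt : a * lam < exp (-1 - θ / ρ) := by
    have hK : (K : ℝ) ≠ 0 := by rintro h; rw [h] at hθK; linarith
    calc a * lam < a * ((θ + 1) / ((K : ℝ) * θ) * exp (-1 - θ / ρ)) :=
          mul_lt_mul_of_pos_left hlam' (by linarith)
      _ = exp (-1 - θ / ρ) := by simp only [a]; field_simp
  have hC : exp (-1 - θ / ρ) < C := exp_lt_exp.mpr (by linarith)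
  obtain ⟨x, hx, hfix⟩ := exists_fixedPoint_mem_Ioo (f := symG K θ ρ lam) (by linarith)
    ((continuousOn_symG K θ ρ lam).mono fun p hp => hp₀.trans_le hp.1)
    (by rwa [symG_coupling_mul K θ ρ lam hp₀.ne'])
    (symG_lt_exp K θ ρ lam (exp_pos _) hp₀)
  calc lam ≤ a * lam := le_mul_of_one_le_left hlam.le ha
    _ < x := hx.1
    _ ≤ pL := hmax x (hp₀.trans hx.1) hfix.symm

/-- One case of the paper's Theorem 4: for `K` symmetric pairs with `θ(K−1) ≥ 1`, every
input rate `λ` in `(0, (θ+1)/(Kθ)·exp(−1 − θ/ρ))` satisfies `λ < p_L`, where `p_L` is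
the larger positive solution of `p = exp(−θ/ρ)·exp(−Kθλ/((θ+1)p))`. -/
theorem sym_stability_large_theta (K : ℕ) (hK : 2 ≤ K) (θ ρ : ℝ)
    (hθ : 0 < θ) (hρ : 0 < ρ) (hθK : 1 ≤ θ * ((K : ℝ) - 1))
    (lam : ℝ) (hlam : 0 < lam)
    (hlam' : lam < (θ + 1) / ((K : ℝ) * θ) * Real.exp (-1 - θ / ρ))
    (pL : ℝ) (hpL : 0 < pL) (hfixL : pL = symG K θ ρ lam pL)
    (hmax : ∀ p : ℝ, 0 < p → p = symG K θ ρ lam p → p ≤ pL) :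
    lam < pL :=
  sym_stability_large_theta_general K θ ρ hθ hθK lam hlam hlam' pL hmax
end

section
/- Fix an integer K ≥ 2 and reals θ > 0 and ρ > 0 with θ·(K−1) < 1, and let λ satisfy 0 < λ < (θ+1)/(Kθ)·exp(−1 − θ/ρ). Let p_L be the larger solution in (0, ∞) of p = exp(−θ/ρ)·exp(−Kθλ/((θ+1)p)). Then λ < p_L if and only if λ < exp(−Kθ/(θ+1) − θ/ρ). -/
open Real

theorem eq_symG_iff (K : ℕ) (θ ρ lam p : ℝ) :
    p = symG K θ ρ lam p ↔ p * exp ((K : ℝ) * θ / (θ + 1) * lam / p) = exp (-(θ / ρ)) := by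
  rw [symG, ← eq_mul_inv_iff_mul_eq₀ (exp_pos _).ne', ← exp_neg]

theorem mul_exp_div_lt_mul_exp_div {c x y : ℝ} (hx : 0 < x) (hcx : c ≤ x) (hxy : x < y) :
    x * exp (c / x) < y * exp (c / y) := by
  have hy : 0 < y := hx.trans hxy
  have hlog : log x - log y < x / y - 1 := by
    rw [← log_div hx.ne' hy.ne']
    exact log_lt_sub_one_of_pos (div_pos hx hy) ((div_lt_one hy).mpr hxy).ne
  have hdiff : c / x - c / y ≤ 1 - x / y := by
    have h : c / x - c / y = c * (y - x) / (x * y) := by field_simp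
    have h' : 1 - x / y = x * (y - x) / (x * y) := by field_simp
    rw [h, h']
    gcongr
  calc x * exp (c / x) = exp (log x + c / x) := by rw [exp_add, exp_log hx]
    _ < exp (log y + c / y) := exp_lt_exp.mpr (by linarith)
    _ = y * exp (c / y) := by rw [exp_add, exp_log hy]

theorem exists_gt_mul_exp_div_eq {c x C : ℝ} (hc : 0 ≤ c) (hx : 0 < x)
    (hxC : x * exp (c / x) < C) : ∃ p, x < p ∧ p * exp (c / p) = C := by
  have hxC' : x < C := (le_mul_of_one_le_right hx.le (one_le_exp (by positivity))).trans_lt hxC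
  have hC : 0 < C := hx.trans hxC'
  have hcont : ContinuousOn (fun p => p * exp (c / p)) (Set.Icc x C) :=
    continuousOn_id.mul (continuousOn_const.div continuousOn_id
      fun p hp => (hx.trans_le hp.1).ne').rexp
  have hCle : C ≤ C * exp (c / C) := le_mul_of_one_le_right hC.le (one_le_exp (by positivity))
  obtain ⟨p, hp, hpC⟩ := intermediate_value_Icc hxC'.le hcont ⟨hxC.le, hCle⟩
  refine ⟨p, lt_of_le_of_ne hp.1 ?_, hpC⟩
  rintro rfl
  exact hxC.ne hpC

theorem sym_stability_small_theta_general (K : ℕ) (θ ρ : ℝ)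
    (hθ : 0 < θ) (hθK : θ * ((K : ℝ) - 1) < 1)
    (lam : ℝ) (hlam : 0 < lam)
    (pL : ℝ) (hfixL : pL = symG K θ ρ lam pL)
    (hmax : ∀ p : ℝ, 0 < p → p = symG K θ ρ lam p → p ≤ pL) :
    lam < pL ↔ lam < Real.exp (-((K : ℝ) * θ / (θ + 1)) - θ / ρ) := by
  set a : ℝ := (K : ℝ) * θ / (θ + 1)
  have hθ1 : 0 < θ + 1 := by linarith
  have ha1 : a < 1 := (div_lt_one hθ1).mpr (by linarith)
  have hRHS : lam < exp (-a - θ / ρ) ↔ lam * exp (a * lam / lam) < exp (-(θ / ρ)) := by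
    rw [mul_div_cancel_right₀ a hlam.ne', ← lt_div_iff₀ (exp_pos a), ← exp_sub, neg_sub_comm]
  rw [hRHS]
  rw [eq_symG_iff] at hfixL
  constructor
  · intro hlt
    rw [← hfixL]
    exact mul_exp_div_lt_mul_exp_div hlam (mul_le_of_le_one_left hlam.le ha1.le) hlt
  · intro hlt
    obtain ⟨p, hlp, hp⟩ := exists_gt_mul_exp_div_eq (by positivity) hlam hlt
    exact hlp.trans_le (hmax p (hlam.trans hlp) ((eq_symG_iff ..).mpr hp))

/-- The other case of the paper's Theorem 4: for `K` symmetric pairs with `θ(K−1) < 1`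
and `λ` in `(0, (θ+1)/(Kθ)·exp(−1 − θ/ρ))`, one has `λ < p_L` iff
`λ < exp(−Kθ/(θ+1) − θ/ρ)`, where `p_L` is the larger positive solution of
`p = exp(−θ/ρ)·exp(−Kθλ/((θ+1)p))`. -/
theorem sym_stability_small_theta (K : ℕ) (hK : 2 ≤ K) (θ ρ : ℝ)
    (hθ : 0 < θ) (hρ : 0 < ρ) (hθK : θ * ((K : ℝ) - 1) < 1)
    (lam : ℝ) (hlam : 0 < lam)
    (hlam' : lam < (θ + 1) / ((K : ℝ) * θ) * Real.exp (-1 - θ / ρ))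
    (pL : ℝ) (hpL : 0 < pL) (hfixL : pL = symG K θ ρ lam pL)
    (hmax : ∀ p : ℝ, 0 < p → p = symG K θ ρ lam p → p ≤ pL) :
    lam < pL ↔ lam < Real.exp (-((K : ℝ) * θ / (θ + 1)) - θ / ρ) :=
  sym_stability_small_theta_general K θ ρ hθ hθK lam hlam pL hfixL hmax
end
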